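/- arXiv:2310.01751 — 10 statements merged into one kernel-verified Lean document; each statement's English description precedes it below -/
import Mathlib

section
/- Assume each ∇f_j is Lipschitz continuous and each B_j is symmetric positive definite. If x ∈ ℝⁿ is not a critical point of F, i.e., there exists d̃ ∈ ℝⁿ with F_j′(x; d̃) < 0 for all j ∈ {1,…,m}, then θ(x) < 0. -/
/-!
Because `theta` is an infimum of reals (with junk value `0` when unbounded below), two facts are
needed. Along `d̃`, `Q_j(x, t d̃) / t → F_j'(x; d̃) < 0` as `t → 0⁺`, since the linear term of `Q_j`
matches `f_j` to first order and the quadratic term is `O(t²)`; so `Q(x, t d̃) < 0` for small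
`t > 0`. And `Q(x, ·) ≥ Q_j(x, ·)` is bounded below, because `B_j` is coercive and `g_j` has an
affine minorant.
-/

open Filter Topology
open scoped RealInnerProductSpace BigOperators

noncomputable section

namespace NPQN

variable {n m : ℕ}

/-- The quadratic form `⟨d, B d⟩` of a matrix `B` acting on Euclidean space. -/
def mquad (B : Matrix (Fin n) (Fin n) ℝ) (d : EuclideanSpace ℝ (Fin n)) : ℝ :=
  ⟪d, Matrix.toEuclideanLin B d⟫

/-- `B ⪰ σ I`, i.e. `⟨d, B d⟩ ≥ σ‖d‖²` for all `d`. -/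
def MatGE (B : Matrix (Fin n) (Fin n) ℝ) (σ : ℝ) : Prop :=
  ∀ d : EuclideanSpace ℝ (Fin n), σ * ‖d‖ ^ 2 ≤ mquad B d

/-- `Q_j(x,d) = ⟨∇f_j(x), d⟩ + (1/2)⟨d, B_j d⟩ + g_j(x+d) − g_j(x)`. -/
def Qj (f g : Fin m → EuclideanSpace ℝ (Fin n) → ℝ)
    (B : Fin m → Matrix (Fin n) (Fin n) ℝ) (x d : EuclideanSpace ℝ (Fin n)) (j : Fin m) : ℝ :=
  ⟪gradient (f j) x, d⟫ + (1 / 2) * mquad (B j) d + g j (x + d) - g j x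

/-- `Q(x,d) = max_j Q_j(x,d)`. -/
def Qmax (f g : Fin m → EuclideanSpace ℝ (Fin n) → ℝ)
    (B : Fin m → Matrix (Fin n) (Fin n) ℝ) (x d : EuclideanSpace ℝ (Fin n)) : ℝ :=
  ⨆ j, Qj f g B x d j

/-- `θ(x) = inf_d Q(x,d)`. -/
def theta (f g : Fin m → EuclideanSpace ℝ (Fin n) → ℝ)
    (B : Fin m → Matrix (Fin n) (Fin n) ℝ) (x : EuclideanSpace ℝ (Fin n)) : ℝ :=
  ⨅ d, Qmax f g B x d

/-- One-sided directional derivative. -/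
def HasDirDeriv (F : EuclideanSpace ℝ (Fin n) → ℝ) (x d : EuclideanSpace ℝ (Fin n)) (c : ℝ) : Prop :=
  Tendsto (fun t : ℝ => (F (x + t • d) - F x) / t) (𝓝[>] (0 : ℝ)) (𝓝 c)

/-- `x` is a critical point of `F = (F_1,…,F_m)`. -/
def IsCriticalPt (F : Fin m → EuclideanSpace ℝ (Fin n) → ℝ) (x : EuclideanSpace ℝ (Fin n)) : Prop :=
  ¬ ∃ d : EuclideanSpace ℝ (Fin n), ∀ j, ∃ c : ℝ, HasDirDeriv (F j) x d c ∧ c < 0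

/-- `ξ` is a subgradient of `g` at `y`. -/
def IsSubgradAt (g : EuclideanSpace ℝ (Fin n) → ℝ) (y ξ : EuclideanSpace ℝ (Fin n)) : Prop :=
  ∀ z, g y + ⟪ξ, z - y⟫ ≤ g z

/-- Hessian of `f` as the derivative of the gradient. -/
def hess (f : EuclideanSpace ℝ (Fin n) → ℝ) (z : EuclideanSpace ℝ (Fin n)) :
    EuclideanSpace ℝ (Fin n) →L[ℝ] EuclideanSpace ℝ (Fin n) :=
  fderiv ℝ (fun y => gradient f y) z

open Set

lemma mquad_smul (B : Matrix (Fin n) (Fin n) ℝ) (t : ℝ) (d : EuclideanSpace ℝ (Fin n)) :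
    mquad B (t • d) = t ^ 2 * mquad B d := by
  simp only [mquad, map_smul, real_inner_smul_left, real_inner_smul_right]
  ring

lemma continuous_mquad (B : Matrix (Fin n) (Fin n) ℝ) : Continuous (mquad B) :=
  continuous_id.inner (Matrix.toEuclideanLin B).continuous_of_finiteDimensional

lemma exists_pos_matGE {B : Matrix (Fin n) (Fin n) ℝ}
    (hB : ∀ v : EuclideanSpace ℝ (Fin n), v ≠ 0 → 0 < mquad B v) : ∃ σ > 0, MatGE B σ := by
  rcases subsingleton_or_nontrivial (EuclideanSpace ℝ (Fin n)) with _ | _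
  · exact ⟨1, one_pos, fun d => by simp [Subsingleton.elim d 0, mquad]⟩
  obtain ⟨u, hu, hmin⟩ := (isCompact_sphere (0 : EuclideanSpace ℝ (Fin n)) 1).exists_isMinOn
    (NormedSpace.sphere_nonempty.2 zero_le_one) (continuous_mquad B).continuousOn
  have hu1 : ‖u‖ = 1 := by simpa using hu
  refine ⟨mquad B u, hB u (by rintro rfl; simp at hu1), fun d => ?_⟩
  rcases eq_or_ne d 0 with rfl | hd
  · simp [mquad]
  have hdpos : 0 < ‖d‖ := norm_pos_iff.2 hd
  have hsphere : ‖d‖⁻¹ • d ∈ Metric.sphere (0 : EuclideanSpace ℝ (Fin n)) 1 := by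
    simp [norm_smul, hdpos.ne']
  calc mquad B u * ‖d‖ ^ 2 ≤ mquad B (‖d‖⁻¹ • d) * ‖d‖ ^ 2 := by gcongr; exact hmin hsphere
    _ = mquad B d := by rw [mquad_smul]; field_simp

lemma exists_le_Qj {f g : Fin m → EuclideanSpace ℝ (Fin n) → ℝ}
    {B : Fin m → Matrix (Fin n) (Fin n) ℝ} {j : Fin m} {σ : ℝ} (hσ : 0 < σ) (hB : MatGE (B j) σ)
    (hgconv : ConvexOn ℝ univ (g j)) (hgcont : Continuous (g j)) (x : EuclideanSpace ℝ (Fin n)) :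
    ∃ b, ∀ d, b ≤ Qj f g B x d j := by
  obtain ⟨l, c, hl, -⟩ := hgconv.exists_affine_le_of_lt (𝕜 := ℝ) (mem_univ x)
    (sub_one_lt (g j x)) isClosed_univ (hgcont.lowerSemicontinuous.lowerSemicontinuousOn _)
  have hg : ∀ z, l z + c ≤ g j z := fun z => by simpa using hl ⟨z, mem_univ z⟩
  set K := ‖gradient (f j) x‖ + ‖l‖
  refine ⟨-K ^ 2 / (2 * σ) + l x + c - g j x, fun d => ?_⟩
  have hinner : -(‖gradient (f j) x‖ * ‖d‖) ≤ ⟪gradient (f j) x, d⟫ :=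
    neg_le_of_abs_le (abs_real_inner_le_norm _ _)
  have hld : -(‖l‖ * ‖d‖) ≤ l d := neg_le_of_abs_le (l.le_opNorm d)
  have hgd := hg (x + d)
  rw [map_add] at hgd
  have hquad : -K ^ 2 / (2 * σ) ≤ σ / 2 * ‖d‖ ^ 2 - K * ‖d‖ := by
    rw [div_le_iff₀ (by positivity)]
    nlinarith [sq_nonneg (σ * ‖d‖ - K)]
  have hBd := hB d
  simp only [Qj]
  linarith

lemma hasDirDeriv_inner_gradient {f : EuclideanSpace ℝ (Fin n) → ℝ} {x : EuclideanSpace ℝ (Fin n)}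
    (hf : DifferentiableAt ℝ f x) (d : EuclideanSpace ℝ (Fin n)) :
    HasDirDeriv f x d ⟪gradient f x, d⟫ := by
  have := (hf.hasGradientAt.hasFDerivAt.hasLineDerivAt d).tendsto_slope_zero_right
  simpa only [HasDirDeriv, smul_eq_mul, inv_mul_eq_div, InnerProductSpace.toDual_apply_apply]
    using this

lemma tendsto_Qj_div {f g : Fin m → EuclideanSpace ℝ (Fin n) → ℝ}
    {B : Fin m → Matrix (Fin n) (Fin n) ℝ} {x d : EuclideanSpace ℝ (Fin n)} {j : Fin m} {c : ℝ}
    (hf : DifferentiableAt ℝ (f j) x) (hF : HasDirDeriv (fun y => f j y + g j y) x d c) :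
    Tendsto (fun t : ℝ => Qj f g B x (t • d) j / t) (𝓝[>] 0) (𝓝 c) := by
  have hquad : Tendsto (fun t : ℝ => t / 2 * mquad (B j) d) (𝓝[>] 0) (𝓝 0) := by
    simpa using ((continuous_id.div_const 2).mul_const (mquad (B j) d)).tendsto' 0 0 (by simp)
      |>.mono_left nhdsWithin_le_nhds
  have := ((tendsto_const_nhds (x := ⟪gradient (f j) x, d⟫)).add hquad).add
    (hF.sub (hasDirDeriv_inner_gradient hf d))
  rw [add_zero, add_sub_cancel] at this
  refine this.congr' ?_
  filter_upwards [self_mem_nhdsWithin] with t (ht : 0 < t)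
  simp only [Qj, real_inner_smul_right, mquad_smul]
  field_simp
  ring

lemma exists_Qmax_neg [Nonempty (Fin m)] {f g : Fin m → EuclideanSpace ℝ (Fin n) → ℝ}
    (B : Fin m → Matrix (Fin n) (Fin n) ℝ) {x d : EuclideanSpace ℝ (Fin n)}
    (hf : ∀ j, DifferentiableAt ℝ (f j) x)
    (hd : ∀ j, ∃ c : ℝ, HasDirDeriv (fun y => f j y + g j y) x d c ∧ c < 0) :
    ∃ d', Qmax f g B x d' < 0 := by
  choose c hc hneg using hd
  have hev : ∀ᶠ t : ℝ in 𝓝[>] 0, 0 < t ∧ ∀ j, Qj f g B x (t • d) j / t < 0 :=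
    eventually_mem_nhdsWithin.and <| eventually_all.2 fun j =>
      (tendsto_Qj_div (hf j) (hc j)).eventually_lt_const (hneg j)
  obtain ⟨t, ht, hQ⟩ := hev.exists
  obtain ⟨j, hj⟩ := exists_eq_ciSup_of_finite (f := Qj f g B x (t • d))
  refine ⟨t • d, ?_⟩
  rw [Qmax, ← hj]
  exact neg_of_div_neg_left (hQ j) ht.le

theorem theta_neg_of_noncritical_general
    (n m : ℕ) (hm : 1 ≤ m)
    (f g : Fin m → EuclideanSpace ℝ (Fin n) → ℝ)
    (hfdiff : ∀ j, ContDiff ℝ 1 (f j))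
    (hgconv : ∀ j, ConvexOn ℝ Set.univ (g j))
    (hgcont : ∀ j, Continuous (g j))
    (B : Fin m → Matrix (Fin n) (Fin n) ℝ)
    (hBpd : ∀ j, ∀ v : EuclideanSpace ℝ (Fin n), v ≠ 0 → 0 < mquad (B j) v)
    (x : EuclideanSpace ℝ (Fin n))
    (hnc : ∃ dt : EuclideanSpace ℝ (Fin n), ∀ j, ∃ c : ℝ,
      HasDirDeriv (fun y => f j y + g j y) x dt c ∧ c < 0) :
    theta f g B x < 0 := by
  have : Nonempty (Fin m) := ⟨⟨0, hm⟩⟩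
  let j₀ : Fin m := ⟨0, hm⟩
  have hf : ∀ j, DifferentiableAt ℝ (f j) x := fun j => (hfdiff j).differentiable one_ne_zero x
  obtain ⟨σ, hσ, hB⟩ := exists_pos_matGE (hBpd j₀)
  obtain ⟨b, hb⟩ := exists_le_Qj (f := f) hσ hB (hgconv j₀) (hgcont j₀) x
  have hbdd : BddBelow (range (Qmax f g B x)) :=
    ⟨b, forall_mem_range.2 fun d => (hb d).trans (le_ciSup (Finite.bddAbove_range _) j₀)⟩
  obtain ⟨dt, hdt⟩ := hnc
  obtain ⟨d, hd⟩ := exists_Qmax_neg B hf hdt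
  exact (ciInf_le hbdd d).trans_lt hd

/-- Assume each `∇f_j` is Lipschitz continuous and each `B_j` is symmetric
positive definite. If `x` is not a critical point of `F`, i.e. there exists `d̃` with
`F_j′(x; d̃) < 0` for all `j`, then `θ(x) < 0`. -/
theorem theta_neg_of_noncritical
    (n m : ℕ) (hn : 1 ≤ n) (hm : 1 ≤ m)
    (f g : Fin m → EuclideanSpace ℝ (Fin n) → ℝ)
    (hfconv : ∀ j, ConvexOn ℝ Set.univ (f j))
    (hfdiff : ∀ j, ContDiff ℝ 1 (f j))
    (hLip : ∀ j, ∃ L : NNReal, LipschitzWith L (fun y => gradient (f j) y))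
    (hgconv : ∀ j, ConvexOn ℝ Set.univ (g j))
    (hgcont : ∀ j, Continuous (g j))
    (B : Fin m → Matrix (Fin n) (Fin n) ℝ)
    (hBsymm : ∀ j, (B j).IsSymm)
    (hBpd : ∀ j, ∀ v : EuclideanSpace ℝ (Fin n), v ≠ 0 → 0 < mquad (B j) v)
    (x : EuclideanSpace ℝ (Fin n))
    (hnc : ∃ dt : EuclideanSpace ℝ (Fin n), ∀ j, ∃ c : ℝ,
      HasDirDeriv (fun y => f j y + g j y) x dt c ∧ c < 0) :
    theta f g B x < 0 :=
  theta_neg_of_noncritical_general n m hm f g hfdiff hgconv hgcont B hBpd x hnc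

end NPQN
end
end

section
/- Assume each B_j is symmetric positive definite. If d ∈ ℝⁿ is a minimizer of Q(x,·) with d ≠ 0, then F_j′(x; d) < 0 for every j ∈ {1,…,m}; in particular x is not a critical point of F. -/
open Filter Topology
open scoped RealInnerProductSpace BigOperators

noncomputable section

/-! Comparing the minimizer `d` with `0` gives `Q_j(x,d) ≤ Q(x,d) ≤ Q(x,0) = 0`. Along the ray
`t ↦ x + t d` the difference quotients of the convex `g_j` decrease as `t ↓ 0`, so `F_j′(x;d)`
exists and is at most `⟨∇f_j(x), d⟩ + g_j(x+d) − g_j(x) = Q_j(x,d) − ½⟨d, B_j d⟩ < 0`. -/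

section LineSlopes

variable {E : Type*} [AddCommGroup E] [Module ℝ E]

theorem ConvexOn.exists_tendsto_slope_right_le {g : E → ℝ} (hg : ConvexOn ℝ Set.univ g)
    (x d : E) :
    ∃ c ≤ g (x + d) - g x,
      Tendsto (fun t : ℝ => t⁻¹ • (g (x + t • d) - g x)) (𝓝[>] 0) (𝓝 c) := by
  set φ : ℝ → ℝ := fun t => g (x + t • d)
  have hφ : ConvexOn ℝ Set.univ φ := by
    simpa [φ, Function.comp_def, AffineMap.lineMap_apply, add_comm] using
      hg.comp_affineMap (AffineMap.lineMap x (x + d))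
  have h0 : (0 : ℝ) ∈ interior Set.univ := by simp
  refine ⟨derivWithin φ (Set.Ioi 0) 0, ?_, ?_⟩
  · simpa [slope_def_field, φ] using
      hφ.rightDeriv_le_slope_of_mem_interior h0 (Set.mem_univ 1) one_pos
  · refine ((hasDerivWithinAt_iff_tendsto_slope' Set.self_notMem_Ioi).mp
      (hφ.hasDerivWithinAt_rightDeriv_of_mem_interior h0)).congr fun t => ?_
    simp [slope_def_module, φ]

end LineSlopes

namespace NPQN

section DirectionalDerivative

variable {n : ℕ} {F f g : EuclideanSpace ℝ (Fin n) → ℝ} {x d : EuclideanSpace ℝ (Fin n)} {c : ℝ}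

theorem hasDirDeriv_iff_tendsto_slope :
    HasDirDeriv F x d c ↔ Tendsto (fun t : ℝ => t⁻¹ • (F (x + t • d) - F x)) (𝓝[>] 0) (𝓝 c) := by
  simp only [HasDirDeriv, smul_eq_mul, div_eq_inv_mul]

theorem exists_hasDirDeriv_add_le (hf : DifferentiableAt ℝ f x) (hg : ConvexOn ℝ Set.univ g)
    (d : EuclideanSpace ℝ (Fin n)) :
    ∃ c ≤ ⟪gradient f x, d⟫ + (g (x + d) - g x), HasDirDeriv (fun y => f y + g y) x d c := by
  obtain ⟨cg, hcg_le, hcg⟩ := hg.exists_tendsto_slope_right_le x d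
  have hf' := (hf.hasGradientAt.hasFDerivAt.hasLineDerivAt d).tendsto_slope_zero_right
  rw [InnerProductSpace.toDual_apply_apply] at hf'
  refine ⟨⟪gradient f x, d⟫ + cg, by linarith, hasDirDeriv_iff_tendsto_slope.mpr ?_⟩
  refine (hf'.add hcg).congr fun t => ?_
  simp only [smul_eq_mul]
  ring

end DirectionalDerivative

section Subproblem

variable {n m : ℕ} {f g : Fin m → EuclideanSpace ℝ (Fin n) → ℝ}
  {B : Fin m → Matrix (Fin n) (Fin n) ℝ} {x d : EuclideanSpace ℝ (Fin n)}

theorem Qmax_zero : Qmax f g B x 0 = 0 := by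
  simp [Qmax, Qj, mquad]

theorem Qj_le_Qmax (j : Fin m) : Qj f g B x d j ≤ Qmax f g B x d :=
  le_ciSup (Set.finite_range _).bddAbove j

theorem Qj_nonpos_of_forall_Qmax_le (hdmin : ∀ e, Qmax f g B x d ≤ Qmax f g B x e)
    (j : Fin m) : Qj f g B x d j ≤ 0 :=
  (Qj_le_Qmax j).trans ((hdmin 0).trans_eq Qmax_zero)

end Subproblem

theorem descent_direction_of_nonzero_minimizer_general
    (n m : ℕ)
    (f g : Fin m → EuclideanSpace ℝ (Fin n) → ℝ)
    (hfdiff : ∀ j, ContDiff ℝ 1 (f j))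
    (hgconv : ∀ j, ConvexOn ℝ Set.univ (g j))
    (B : Fin m → Matrix (Fin n) (Fin n) ℝ)
    (hBpd : ∀ j, ∀ v : EuclideanSpace ℝ (Fin n), v ≠ 0 → 0 < mquad (B j) v)
    (x d : EuclideanSpace ℝ (Fin n))
    (hdmin : ∀ e, Qmax f g B x d ≤ Qmax f g B x e)
    (hdne : d ≠ 0) :
    (∀ j, ∃ c : ℝ, HasDirDeriv (fun y => f j y + g j y) x d c ∧ c < 0) ∧
    ¬ IsCriticalPt (fun j y => f j y + g j y) x := by
  have hdescent : ∀ j, ∃ c : ℝ, HasDirDeriv (fun y => f j y + g j y) x d c ∧ c < 0 := by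
    intro j
    obtain ⟨c, hc_le, hc⟩ :=
      exists_hasDirDeriv_add_le ((hfdiff j).differentiable one_ne_zero x) (hgconv j) d
    have hQ := Qj_nonpos_of_forall_Qmax_le hdmin j
    have hB := hBpd j d hdne
    rw [Qj] at hQ
    exact ⟨c, hc, by linarith⟩
  exact ⟨hdescent, fun hcrit => hcrit ⟨d, hdescent⟩⟩

/-- Assume each `B_j` is symmetric positive definite. If `d ≠ 0` is a
minimizer of `Q(x,·)`, then `F_j′(x; d) < 0` for every `j`; in particular `x` is not a
critical point of `F`. -/
theorem descent_direction_of_nonzero_minimizer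
    (n m : ℕ) (hn : 1 ≤ n) (hm : 1 ≤ m)
    (f g : Fin m → EuclideanSpace ℝ (Fin n) → ℝ)
    (hfconv : ∀ j, ConvexOn ℝ Set.univ (f j))
    (hfdiff : ∀ j, ContDiff ℝ 1 (f j))
    (hgconv : ∀ j, ConvexOn ℝ Set.univ (g j))
    (hgcont : ∀ j, Continuous (g j))
    (B : Fin m → Matrix (Fin n) (Fin n) ℝ)
    (hBsymm : ∀ j, (B j).IsSymm)
    (hBpd : ∀ j, ∀ v : EuclideanSpace ℝ (Fin n), v ≠ 0 → 0 < mquad (B j) v)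
    (x d : EuclideanSpace ℝ (Fin n))
    (hdmin : ∀ e, Qmax f g B x d ≤ Qmax f g B x e)
    (hdne : d ≠ 0) :
    (∀ j, ∃ c : ℝ, HasDirDeriv (fun y => f j y + g j y) x d c ∧ c < 0) ∧
    ¬ IsCriticalPt (fun j y => f j y + g j y) x :=
  descent_direction_of_nonzero_minimizer_general n m f g hfdiff hgconv B hBpd x d hdmin hdne

end NPQN
end
end

section
/- Suppose σ > 0, and for each j ∈ {1,…,m} the matrix-valued map x ↦ B_j(x) into symmetric n×n matrices is continuous with B_j(x) ⪰ σI for all x ∈ ℝⁿ. Then the optimal value function x ↦ θ(x) is continuous on ℝⁿ, and the map x ↦ d(x) sending x to the unique minimizer of Q(x,·) is continuous on ℝⁿ. -/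
open Filter Topology
open scoped RealInnerProductSpace BigOperators

noncomputable section

/-!
Each `Q_j(x, ·)` is `σ`-strongly convex (a linear term, half a quadratic form bounded below by
`σ ‖d‖²`, and a translate of the convex `g_j`), hence so is their maximum `Q(x, ·)`, and `Q` is
jointly continuous in `(x, d)`. Strong convexity gives quadratic growth
`Q(x₀, d) ≥ Q(x₀, d(x₀)) + σ/2 ‖d - d(x₀)‖²`. Since `Q(x, ·) → Q(x₀, ·)` uniformly on the compact
ball of radius `ε` around `d(x₀)`, for `x` near `x₀` the function `Q(x, ·)` exceeds `Q(x, d(x₀))`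
on the sphere bounding that ball, so by convexity its minimizer `d(x)` lies inside the ball.
Then `θ(x) = Q(x, d(x))` is continuous as a composition.
-/

section StrongConvexity

variable {E : Type*} [NormedAddCommGroup E] [NormedSpace ℝ E] {s : Set E} {σ : ℝ}

theorem StrongConvexOn.add_convexOn {f g : E → ℝ} (hf : StrongConvexOn s σ f)
    (hg : ConvexOn ℝ s g) : StrongConvexOn s σ (f + g) := by
  have h := UniformConvexOn.add hf hg.uniformConvexOn_zero
  rwa [add_zero] at h

theorem UniformConvexOn.ciSup {ι : Type*} [Finite ι] [Nonempty ι] {φ : ℝ → ℝ} {f : ι → E → ℝ}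
    (hf : ∀ i, UniformConvexOn s φ (f i)) : UniformConvexOn s φ fun x => ⨆ i, f i x := by
  obtain ⟨i₀⟩ := ‹Nonempty ι›
  refine ⟨(hf i₀).1, fun x hx y hy a b ha hb hab => ciSup_le fun i => ?_⟩
  have hbdd : ∀ z, BddAbove (Set.range fun i => f i z) := fun z => (Set.finite_range _).bddAbove
  calc f i (a • x + b • y) ≤ a • f i x + b • f i y - a * b * φ ‖x - y‖ := (hf i).2 hx hy ha hb hab
    _ ≤ a • (⨆ i, f i x) + b • (⨆ i, f i y) - a * b * φ ‖x - y‖ := by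
      gcongr
      exacts [le_ciSup (hbdd x) i, le_ciSup (hbdd y) i]

theorem StrongConvexOn.add_sq_le_of_isMinOn {f : E → ℝ} (hf : StrongConvexOn s σ f) {a d : E}
    (ha : a ∈ s) (hd : d ∈ s) (hmin : IsMinOn f s a) : f a + σ / 2 * ‖d - a‖ ^ 2 ≤ f d := by
  have hsegment : ∀ t ∈ Set.Ioc (0 : ℝ) 1, f a + (1 - t) * (σ / 2 * ‖d - a‖ ^ 2) ≤ f d := by
    rintro t ⟨ht₀, ht₁⟩
    have hcombo := hf.2 ha hd (sub_nonneg.2 ht₁) ht₀.le (sub_add_cancel 1 t)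
    have hle := hmin (hf.1 ha hd (sub_nonneg.2 ht₁) ht₀.le (sub_add_cancel 1 t))
    simp only [smul_eq_mul, norm_sub_rev a d] at hcombo
    have h : t * (f a + (1 - t) * (σ / 2 * ‖d - a‖ ^ 2) - f d) ≤ 0 := by linarith [hle.out]
    exact sub_nonpos.1 (nonpos_of_mul_nonpos_right h ht₀)
  have hlim : Tendsto (fun t : ℝ => f a + (1 - t) * (σ / 2 * ‖d - a‖ ^ 2)) (𝓝[>] 0)
      (𝓝 (f a + (1 - 0) * (σ / 2 * ‖d - a‖ ^ 2))) :=
    (Continuous.tendsto (by fun_prop) 0).mono_left nhdsWithin_le_nhds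
  simpa using le_of_tendsto hlim (eventually_of_mem (Ioc_mem_nhdsGT one_pos) hsegment)


theorem continuous_of_strongConvexOn_of_isMinOn [ProperSpace E] {X : Type*} [TopologicalSpace X]
    {Φ : X → E → ℝ} (hΦ : Continuous (Function.uncurry Φ)) (hσ : 0 < σ)
    (hconv : ∀ x, StrongConvexOn Set.univ σ (Φ x)) {a : X → E}
    (hmin : ∀ x, IsMinOn (Φ x) Set.univ (a x)) : Continuous a := by
  refine continuous_iff_continuousAt.2 fun x₀ => Metric.tendsto_nhds.2 fun ε hε => ?_
  have hη : 0 < σ / 4 * ε ^ 2 := by positivity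
  obtain ⟨U, hU, hclose⟩ := (isCompact_closedBall (a x₀) ε).mem_uniformity_of_prod
    hΦ.continuousOn (Set.mem_univ x₀) (Metric.dist_mem_uniformity hη)
  rw [nhdsWithin_univ] at hU
  filter_upwards [hU] with x hx
  by_contra! hfar
  set p := AffineMap.lineMap (a x₀) (a x) (ε / dist (a x) (a x₀))
  have hp : ‖p - a x₀‖ = ε := by
    rw [← dist_eq_norm, dist_lineMap_left, Real.norm_of_nonneg (by positivity), dist_comm (a x₀),
      div_mul_cancel₀ _ (hε.trans_le hfar).ne']
  have hseg : p ∈ segment ℝ (a x₀) (a x) :=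
    lineMap_mem_segment ℝ _ _ ⟨by positivity, div_le_one_of_le₀ hfar dist_nonneg⟩
  have hdescent : Φ x p ≤ Φ x (a x₀) :=
    (((hconv x).convexOn fun r => by positivity).le_on_segment trivial trivial hseg).trans
      (max_le le_rfl (hmin x trivial))
  have hgrowth := (hconv x₀).add_sq_le_of_isMinOn trivial trivial (hmin x₀) (d := p)
  have hp_close := hclose x hx p (by rw [Metric.mem_closedBall, dist_eq_norm, hp])
  have hcenter_close := hclose x hx (a x₀) (Metric.mem_closedBall_self hε.le)
  simp only [Set.mem_ofPred_eq, Real.dist_eq, abs_sub_lt_iff] at hp_close hcenter_close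
  rw [hp] at hgrowth
  linarith

end StrongConvexity

theorem continuous_ciSup_of_finite {X L ι : Type*} [TopologicalSpace X] [TopologicalSpace L]
    [ConditionallyCompleteLattice L] [ContinuousSup L] [Fintype ι] [Nonempty ι]
    {f : ι → X → L} (hf : ∀ i, Continuous (f i)) : Continuous fun x => ⨆ i, f i x := by
  simp_rw [← Finset.sup'_univ_eq_ciSup]
  exact Continuous.finset_sup'_apply Finset.univ_nonempty fun i _ => hf i

theorem ContDiff.continuous_gradient {F : Type*} [NormedAddCommGroup F] [InnerProductSpace ℝ F]
    [CompleteSpace F] {f : F → ℝ} (hf : ContDiff ℝ 1 f) : Continuous (gradient f) :=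
  (InnerProductSpace.toDual ℝ F).symm.continuous.comp (hf.continuous_fderiv one_ne_zero)

namespace NPQN

variable {n m : ℕ}

theorem mquad_add_smul (B : Matrix (Fin n) (Fin n) ℝ) (x y : EuclideanSpace ℝ (Fin n))
    {a b : ℝ} (hab : a + b = 1) :
    mquad B (a • x + b • y) = a * mquad B x + b * mquad B y - a * b * mquad B (x - y) := by
  obtain rfl := eq_sub_of_add_eq hab
  simp only [mquad, map_add, map_smul, map_sub, inner_add_left, inner_add_right,
    inner_sub_left, inner_sub_right, real_inner_smul_left, real_inner_smul_right]
  ring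

theorem strongConvexOn_half_mquad {B : Matrix (Fin n) (Fin n) ℝ} {σ : ℝ} (hB : MatGE B σ) :
    StrongConvexOn Set.univ σ fun d => 1 / 2 * mquad B d := by
  refine ⟨convex_univ, fun x _ y _ a b ha hb hab => ?_⟩
  have h := mul_le_mul_of_nonneg_left (hB (x - y)) (mul_nonneg ha hb)
  simp only [mquad_add_smul B x y hab, smul_eq_mul]
  linarith

@[fun_prop]
theorem continuous_mquad_s4 {X : Type*} [TopologicalSpace X] {B : X → Matrix (Fin n) (Fin n) ℝ}
    {d : X → EuclideanSpace ℝ (Fin n)} (hB : Continuous B) (hd : Continuous d) :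
    Continuous fun x => mquad (B x) (d x) := by
  simp only [mquad, Matrix.toLpLin_apply]
  fun_prop

section

variable {f g : Fin m → EuclideanSpace ℝ (Fin n) → ℝ} {σ : ℝ}

theorem strongConvexOn_Qj {B : Fin m → Matrix (Fin n) (Fin n) ℝ} (x : EuclideanSpace ℝ (Fin n))
    {j : Fin m} (hg : ConvexOn ℝ Set.univ (g j)) (hB : MatGE (B j) σ) :
    StrongConvexOn Set.univ σ fun d => Qj f g B x d j := by
  have hlinear : ConvexOn ℝ Set.univ fun d => ⟪gradient (f j) x, d⟫ :=
    (innerSL ℝ (gradient (f j) x)).toLinearMap.convexOn convex_univ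
  have hshift : ConvexOn ℝ Set.univ fun d => g j (x + d) - g j x := by
    have h := (hg.translate_right x).add_const (-g j x)
    rw [Set.preimage_univ] at h
    exact h
  convert (strongConvexOn_half_mquad hB).add_convexOn (hlinear.add hshift) using 1
  ext d
  simp only [Qj, Pi.add_apply]
  ring

theorem strongConvexOn_Qmax [Nonempty (Fin m)] {B : Fin m → Matrix (Fin n) (Fin n) ℝ}
    (x : EuclideanSpace ℝ (Fin n)) (hg : ∀ j, ConvexOn ℝ Set.univ (g j))
    (hB : ∀ j, MatGE (B j) σ) : StrongConvexOn Set.univ σ (Qmax f g B x) :=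
  UniformConvexOn.ciSup fun j => strongConvexOn_Qj x (hg j) (hB j)

theorem continuous_Qmax [Nonempty (Fin m)] (hf : ∀ j, ContDiff ℝ 1 (f j))
    (hg : ∀ j, Continuous (g j)) {B : EuclideanSpace ℝ (Fin n) → Fin m → Matrix (Fin n) (Fin n) ℝ}
    (hB : ∀ j, Continuous fun x => B x j) :
    Continuous fun p : EuclideanSpace ℝ (Fin n) × EuclideanSpace ℝ (Fin n) =>
      Qmax f g (B p.1) p.1 p.2 := by
  refine continuous_ciSup_of_finite fun j => ?_
  have hBj := hB j
  have hgrad := (hf j).continuous_gradient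
  simp only [Qj]
  fun_prop

theorem theta_eq_Qmax_of_isMinOn {B : Fin m → Matrix (Fin n) (Fin n) ℝ}
    {x d : EuclideanSpace ℝ (Fin n)} (h : IsMinOn (Qmax f g B x) Set.univ d) :
    theta f g B x = Qmax f g B x d :=
  le_antisymm (ciInf_le ⟨_, Set.forall_mem_range.2 fun _ => h trivial⟩ d)
    (le_ciInf fun _ => h trivial)

end

theorem theta_and_dsel_continuous_general
    (n m : ℕ) (hm : 1 ≤ m)
    (f g : Fin m → EuclideanSpace ℝ (Fin n) → ℝ)
    (hfdiff : ∀ j, ContDiff ℝ 1 (f j))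
    (hgconv : ∀ j, ConvexOn ℝ Set.univ (g j))
    (hgcont : ∀ j, Continuous (g j))
    (σ : ℝ) (hσ : 0 < σ)
    (B : EuclideanSpace ℝ (Fin n) → Fin m → Matrix (Fin n) (Fin n) ℝ)
    (hBcont : ∀ j, Continuous (fun x => B x j))
    (hB : ∀ x j, MatGE (B x j) σ)
    (dsel : EuclideanSpace ℝ (Fin n) → EuclideanSpace ℝ (Fin n))
    (hdsel : ∀ x e, Qmax f g (B x) x (dsel x) ≤ Qmax f g (B x) x e) :
    Continuous (fun x => theta f g (B x) x) ∧ Continuous dsel := by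
  have : Nonempty (Fin m) := ⟨⟨0, hm⟩⟩
  have hmin : ∀ x, IsMinOn (Qmax f g (B x) x) Set.univ (dsel x) := fun x e _ => hdsel x e
  have hQ : Continuous (Function.uncurry fun x => Qmax f g (B x) x) :=
    continuous_Qmax hfdiff hgcont hBcont
  have hdsel_cont : Continuous dsel := continuous_of_strongConvexOn_of_isMinOn hQ hσ
    (fun x => strongConvexOn_Qmax x hgconv (hB x)) hmin
  refine ⟨(hQ.comp (continuous_id.prodMk hdsel_cont)).congr fun x => ?_, hdsel_cont⟩
  exact (theta_eq_Qmax_of_isMinOn (hmin x)).symm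

/-- If each `x ↦ B_j(x)` is a continuous map into symmetric matrices with
`B_j(x) ⪰ σI` for all `x`, then `x ↦ θ(x)` is continuous and the map `x ↦ d(x)` sending
`x` to the unique minimizer of `Q(x,·)` is continuous. -/
theorem theta_and_dsel_continuous
    (n m : ℕ) (hn : 1 ≤ n) (hm : 1 ≤ m)
    (f g : Fin m → EuclideanSpace ℝ (Fin n) → ℝ)
    (hfconv : ∀ j, ConvexOn ℝ Set.univ (f j))
    (hfdiff : ∀ j, ContDiff ℝ 1 (f j))
    (hgconv : ∀ j, ConvexOn ℝ Set.univ (g j))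
    (hgcont : ∀ j, Continuous (g j))
    (σ : ℝ) (hσ : 0 < σ)
    (B : EuclideanSpace ℝ (Fin n) → Fin m → Matrix (Fin n) (Fin n) ℝ)
    (hBcont : ∀ j, Continuous (fun x => B x j))
    (hBsymm : ∀ x j, (B x j).IsSymm)
    (hB : ∀ x j, MatGE (B x j) σ)
    (dsel : EuclideanSpace ℝ (Fin n) → EuclideanSpace ℝ (Fin n))
    (hdsel : ∀ x e, Qmax f g (B x) x (dsel x) ≤ Qmax f g (B x) x e) :
    Continuous (fun x => theta f g (B x) x) ∧ Continuous dsel :=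
  theta_and_dsel_continuous_general n m hm f g hfdiff hgconv hgcont σ hσ B hBcont hB dsel hdsel

end NPQN
end
end

section
/- Assume each B_j is symmetric positive definite. If d* ∈ ℝⁿ is a minimizer of Q(x,·) and θ = Q(x,d*), then there exist λ ∈ Δ_m and vectors ξ_j ∈ ∂g_j(x+d*) for j = 1,…,m such that Σ_{j=1}^m λ_j(∇f_j(x) + B_j d* + ξ_j) = 0, Q_j(x,d*) ≤ θ for all j, and λ_j(Q_j(x,d*) − θ) = 0 for all j. -/
open Filter Topology
open scoped RealInnerProductSpace BigOperators

noncomputable section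

/-!
Since `d*` minimizes `max_j Q_j(x,·)` and the `Q_j(x,·)` are convex, separating `0` from the open
convex set `{y ∈ ℝ^m | ∃ d, ∀ j, Q_j(x,d) - θ < y_j}` gives weights `λ ∈ Δ_m` with
`θ ≤ ∑ λ_j Q_j(x,d)` for every `d`. At `d = d*` this forces complementary slackness, and it shows
that `d*` minimizes `∑ λ_j Q_j(x,·)`. Differentiating along `t ↦ d* + t u` from the right gives
`-⟪∑ λ_j (∇f_j(x) + B_j d*), u⟫ ≤ ∑ λ_j g_j'(x+d*; u)`. The directional derivatives `g_j'(x+d*; ·)`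
are sublinear, so the Hahn–Banach theorem on `(ℝⁿ)^m` splits this linear minorant into vectors `ξ_j`
with `⟪ξ_j, ·⟫ ≤ g_j'(x+d*; ·)`, which are subgradients of `g_j` at `x + d*`.
-/

open Set

section DirDeriv

variable {E : Type*} [AddCommGroup E] [Module ℝ E] {g : E → ℝ}

def dirDeriv (g : E → ℝ) (y u : E) : ℝ :=
  derivWithin (fun t : ℝ => g (y + t • u)) (Ioi 0) 0

theorem ConvexOn.comp_line (hg : ConvexOn ℝ univ g) (y u : E) :
    ConvexOn ℝ univ (fun t : ℝ => g (y + t • u)) := by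
  simpa [Function.comp_def] using
    (hg.translate_right y).comp_linearMap (LinearMap.toSpanSingleton ℝ E u)

theorem ConvexOn.hasDerivWithinAt_dirDeriv (hg : ConvexOn ℝ univ g) (y u : E) :
    HasDerivWithinAt (fun t : ℝ => g (y + t • u)) (dirDeriv g y u) (Ioi 0) 0 :=
  (hg.comp_line y u).hasDerivWithinAt_rightDeriv_of_mem_interior (by simp)

theorem ConvexOn.tendsto_slope_dirDeriv (hg : ConvexOn ℝ univ g) (y u : E) :
    Tendsto (fun t : ℝ => (g (y + t • u) - g y) / t) (𝓝[>] 0) (𝓝 (dirDeriv g y u)) := by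
  have h := (hasDerivWithinAt_iff_tendsto_slope' self_notMem_Ioi).mp
    (hg.hasDerivWithinAt_dirDeriv y u)
  simpa only [slope_fun_def_field, zero_smul, add_zero, sub_zero] using h

theorem ConvexOn.dirDeriv_le_sub (hg : ConvexOn ℝ univ g) (y u : E) :
    dirDeriv g y u ≤ g (y + u) - g y := by
  simpa [dirDeriv, slope_def_field] using
    (hg.comp_line y u).rightDeriv_le_slope_of_mem_interior (by simp) (mem_univ 1) one_pos

theorem ConvexOn.dirDeriv_smul (hg : ConvexOn ℝ univ g) (y u : E) {c : ℝ} (hc : 0 < c) :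
    dirDeriv g y (c • u) = c * dirDeriv g y u := by
  have hcomp := (hg.hasDerivWithinAt_dirDeriv y u).comp_of_eq 0
    (hasDerivAt_mul_const c).hasDerivWithinAt
    (fun t ht => mul_pos ht hc : MapsTo (· * c) (Ioi 0) (Ioi 0)) (zero_mul c).symm
  rw [mul_comm]
  refine HasDerivWithinAt.derivWithin ?_ (uniqueDiffWithinAt_Ioi 0)
  simpa only [Function.comp_def, mul_smul] using hcomp

theorem ConvexOn.dirDeriv_add_le (hg : ConvexOn ℝ univ g) (y u v : E) :
    dirDeriv g y (u + v) ≤ dirDeriv g y u + dirDeriv g y v := by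
  -- `y + t • (u + v)` is the midpoint of `y + t • 2u` and `y + t • 2v`
  have hslope : ∀ t : ℝ, 0 < t → (g (y + t • (u + v)) - g y) / t ≤
      (1 / 2) * ((g (y + t • (2 : ℝ) • u) - g y) / t) +
        (1 / 2) * ((g (y + t • (2 : ℝ) • v) - g y) / t) := by
    intro t ht
    have hmid := hg.2 (mem_univ (y + t • (2 : ℝ) • u)) (mem_univ (y + t • (2 : ℝ) • v))
      (by norm_num : (0 : ℝ) ≤ 1 / 2) (by norm_num : (0 : ℝ) ≤ 1 / 2) (by norm_num)
    have hcomb : (1 / 2 : ℝ) • (y + t • (2 : ℝ) • u) + (1 / 2 : ℝ) • (y + t • (2 : ℝ) • v) =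
        y + t • (u + v) := by module
    rw [hcomb, smul_eq_mul, smul_eq_mul] at hmid
    rw [← mul_div_assoc, ← mul_div_assoc, ← add_div]
    gcongr
    linarith
  have hlim := le_of_tendsto_of_tendsto (hg.tendsto_slope_dirDeriv y (u + v))
    (((hg.tendsto_slope_dirDeriv y ((2 : ℝ) • u)).const_mul (1 / 2)).add
      ((hg.tendsto_slope_dirDeriv y ((2 : ℝ) • v)).const_mul (1 / 2)))
    (eventually_nhdsWithin_of_forall hslope)
  rw [hg.dirDeriv_smul y u two_pos, hg.dirDeriv_smul y v two_pos] at hlim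
  linarith

end DirDeriv

theorem nonneg_of_hasDerivWithinAt_Ioi {ψ : ℝ → ℝ} {ψ' a : ℝ}
    (hψ : HasDerivWithinAt ψ ψ' (Ioi a) a) (hmin : ∀ t, a < t → ψ a ≤ ψ t) : 0 ≤ ψ' := by
  refine ge_of_tendsto ((hasDerivWithinAt_iff_tendsto_slope' self_notMem_Ioi).mp hψ)
    (eventually_nhdsWithin_of_forall fun t (ht : a < t) => ?_)
  rw [slope_def_field]
  exact div_nonneg (sub_nonneg.2 (hmin t ht)) (sub_nonneg.2 ht.le)

section HahnBanach

variable {ι E : Type*} [Fintype ι]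

theorem map_zero_of_pos_smul_eq_mul [AddCommGroup E] [Module ℝ E] {p : E → ℝ}
    (hp : ∀ c : ℝ, 0 < c → ∀ u, p (c • u) = c * p u) : p 0 = 0 := by
  have h := hp 2 two_pos 0
  rw [smul_zero] at h
  linarith

theorem exists_linearMap_le_sum_of_le_sum_mul [AddCommGroup E] [Module ℝ E] (p : ι → E → ℝ)
    (hp_smul : ∀ i, ∀ c : ℝ, 0 < c → ∀ u, p i (c • u) = c * p i u)
    (hp_add : ∀ i u v, p i (u + v) ≤ p i u + p i v)
    {w : ι → ℝ} (hw_nonneg : ∀ i, 0 ≤ w i) (hw : w ≠ 0)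
    (ℓ : E →ₗ[ℝ] ℝ) (hℓ : ∀ u, ℓ u ≤ ∑ i, w i * p i u) :
    ∃ L : (ι → E) →ₗ[ℝ] ℝ, (∀ v, L v ≤ ∑ i, p i (v i)) ∧ ∀ u, L (fun i => w i • u) = ℓ u := by
  have hp_smul' : ∀ i u, p i (w i • u) = w i * p i u := fun i u => by
    rcases (hw_nonneg i).eq_or_lt with h | h
    · simp [← h, map_zero_of_pos_smul_eq_mul (hp_smul i)]
    · exact hp_smul i _ h u
  let T : E →ₗ[ℝ] (ι → E) := LinearMap.pi fun i => w i • LinearMap.id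
  have hT : Function.Injective T := by
    obtain ⟨i, hi⟩ := Function.ne_iff.mp hw
    intro u v huv
    exact smul_right_injective E hi (congr_fun huv i)
  have hℓT : ∀ u, (ℓ ∘ₗ (LinearEquiv.ofInjective T hT).symm.toLinearMap) ⟨T u, u, rfl⟩ = ℓ u :=
    fun u => congrArg ℓ ((LinearEquiv.ofInjective T hT).symm_apply_apply u)
  obtain ⟨L, hLT, hLp⟩ := exists_extension_of_le_sublinear
    ⟨T.range, ℓ ∘ₗ (LinearEquiv.ofInjective T hT).symm.toLinearMap⟩ (fun v => ∑ i, p i (v i))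
    (fun c hc v => by simp only [Pi.smul_apply, hp_smul _ c hc, Finset.mul_sum])
    (fun v v' => by simpa only [Pi.add_apply, ← Finset.sum_add_distrib]
      using Finset.sum_le_sum fun i _ => hp_add i (v i) (v' i))
    (by
      rintro ⟨_, u, rfl⟩
      simpa [T, hℓT, hp_smul'] using hℓ u)
  exact ⟨L, hLp, fun u => (hLT ⟨T u, u, rfl⟩).trans (hℓT u)⟩

theorem exists_inner_le_of_inner_le_sum_mul [NormedAddCommGroup E] [InnerProductSpace ℝ E]
    [FiniteDimensional ℝ E] (p : ι → E → ℝ)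
    (hp_smul : ∀ i, ∀ c : ℝ, 0 < c → ∀ u, p i (c • u) = c * p i u)
    (hp_add : ∀ i u v, p i (u + v) ≤ p i u + p i v)
    {w : ι → ℝ} (hw_nonneg : ∀ i, 0 ≤ w i) (hw : w ≠ 0)
    {ξ : E} (hξ : ∀ u, ⟪ξ, u⟫ ≤ ∑ i, w i * p i u) :
    ∃ η : ι → E, (∀ i u, ⟪η i, u⟫ ≤ p i u) ∧ ∑ i, w i • η i = ξ := by
  classical
  obtain ⟨L, hLp, hLw⟩ :=
    exists_linearMap_le_sum_of_le_sum_mul p hp_smul hp_add hw_nonneg hw (innerₛₗ ℝ ξ) hξ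
  let η : ι → E := fun i => (InnerProductSpace.toDual ℝ E).symm
    (L ∘ₗ LinearMap.single ℝ (fun _ => E) i).toContinuousLinearMap
  have hη : ∀ i u, ⟪η i, u⟫ = L (Pi.single i u) := fun i u => by
    simp [η, InnerProductSpace.toDual_symm_apply]
  refine ⟨η, fun i u => ?_, ext_inner_right ℝ fun u => ?_⟩
  · calc ⟪η i, u⟫ = L (Pi.single i u) := hη i u
      _ ≤ ∑ k, p k ((Pi.single i u : ι → E) k) := hLp _
      _ = p i u := by
        rw [Finset.sum_eq_single i (fun k _ hk => by
          rw [Pi.single_eq_of_ne hk, map_zero_of_pos_smul_eq_mul (hp_smul k)]) (by simp),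
          Pi.single_eq_same]
  · calc ⟪∑ i, w i • η i, u⟫ = L (∑ i, Pi.single i (w i • u)) := by
          simp [sum_inner, real_inner_smul_left, hη, map_sum, Pi.single_smul]
      _ = ⟪ξ, u⟫ := by rw [Finset.univ_sum_single (fun i => w i • u)]; exact hLw u

end HahnBanach

theorem exists_mem_stdSimplex_pos_of_isUpperSet {ι : Type*} [Fintype ι] {S : Set (ι → ℝ)}
    (hS_convex : Convex ℝ S) (hS_open : IsOpen S) (hS_upper : IsUpperSet S) (hS : S.Nonempty)
    (h0 : (0 : ι → ℝ) ∉ S) :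
    ∃ w ∈ stdSimplex ℝ ι, ∀ y ∈ S, 0 < ∑ i, w i * y i := by
  classical
  obtain ⟨φ, hφ⟩ := geometric_hahn_banach_open_point hS_convex hS_open h0
  have hφ_neg : ∀ y ∈ S, φ y < 0 := by simpa using hφ
  have hφ_apply : ∀ y, φ y = ∑ i, y i * φ (Pi.single i 1) := fun y => by
    conv_lhs => rw [← Finset.univ_sum_single y]
    refine (map_sum φ _ _).trans (Finset.sum_congr rfl fun i _ => ?_)
    rw [← smul_eq_mul, ← map_smul, ← Pi.single_smul', smul_eq_mul, mul_one]
  obtain ⟨y₀, hy₀⟩ := hS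
  have hφ_single : ∀ i, φ (Pi.single i 1) ≤ 0 := by
    intro i
    by_contra! hpos
    have hc : 0 ≤ -φ y₀ / φ (Pi.single i 1) := div_nonneg (by linarith [hφ_neg y₀ hy₀]) hpos.le
    have hle : y₀ ≤ y₀ + (-φ y₀ / φ (Pi.single i 1)) • (Pi.single i 1 : ι → ℝ) :=
      le_add_of_nonneg_right (smul_nonneg hc (Pi.single_nonneg.2 zero_le_one))
    have := hφ_neg _ (hS_upper hle hy₀)
    rw [map_add, map_smul, smul_eq_mul, div_mul_cancel₀ _ hpos.ne'] at this
    linarith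
  set c := ∑ i, φ (Pi.single i 1)
  have hc : c < 0 := by
    refine (Finset.sum_nonpos fun i _ => hφ_single i).lt_of_ne fun hc => ?_
    have hzero := (Finset.sum_eq_zero_iff_of_nonpos fun i _ => hφ_single i).mp hc
    have hy := hφ_neg y₀ hy₀
    rw [hφ_apply] at hy
    simp [hzero] at hy
  refine ⟨fun i => φ (Pi.single i 1) / c, ⟨fun i => div_nonneg_of_nonpos (hφ_single i) hc.le,
    by rw [← Finset.sum_div, div_self hc.ne]⟩, fun y hy => ?_⟩
  have key : ∑ i, φ (Pi.single i 1) / c * y i = φ y / c := by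
    rw [hφ_apply, Finset.sum_div]
    exact Finset.sum_congr rfl fun i _ => by ring
  rw [key]
  exact div_pos_of_neg_of_neg (hφ_neg y hy) hc

theorem convex_setOf_exists_forall_lt {ι E : Type*} [AddCommGroup E] [Module ℝ E]
    {Q : ι → E → ℝ} (hQ : ∀ i, ConvexOn ℝ univ (Q i)) :
    Convex ℝ {y : ι → ℝ | ∃ d, ∀ i, Q i d < y i} := by
  rintro y₁ ⟨d₁, h₁⟩ y₂ ⟨d₂, h₂⟩ a b ha hb hab
  refine ⟨a • d₁ + b • d₂, fun i => ?_⟩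
  have hconv := (hQ i).2 (mem_univ d₁) (mem_univ d₂) ha hb hab
  simp only [smul_eq_mul] at hconv
  simp only [Pi.add_apply, Pi.smul_apply, smul_eq_mul]
  refine hconv.trans_lt ?_
  rcases ha.eq_or_lt with rfl | ha'
  · rw [zero_add] at hab
    simpa [hab] using h₂ i
  · exact add_lt_add_of_lt_of_le (mul_lt_mul_of_pos_left (h₁ i) ha')
      (mul_le_mul_of_nonneg_left (h₂ i).le hb)

theorem isOpen_setOf_exists_forall_lt {ι E : Type*} [Finite ι] (Q : ι → E → ℝ) :
    IsOpen {y : ι → ℝ | ∃ d, ∀ i, Q i d < y i} := by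
  have : {y : ι → ℝ | ∃ d, ∀ i, Q i d < y i} = ⋃ d, ⋂ i, (fun y => y i) ⁻¹' Ioi (Q i d) := by
    ext; simp
  rw [this]
  exact isOpen_iUnion fun d => isOpen_iInter_of_finite fun i =>
    isOpen_Ioi.preimage (continuous_apply i)

theorem exists_mem_stdSimplex_le_sum_mul {ι E : Type*} [Fintype ι] [AddCommGroup E]
    [Module ℝ E] {Q : ι → E → ℝ} (hQ : ∀ i, ConvexOn ℝ univ (Q i)) {θ : ℝ}
    (h : ∀ d, ∃ i, θ ≤ Q i d) :
    ∃ w ∈ stdSimplex ℝ ι, ∀ d, θ ≤ ∑ i, w i * Q i d := by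
  let Q' : ι → E → ℝ := fun i d => Q i d - θ
  obtain ⟨w, hw, hpos⟩ := exists_mem_stdSimplex_pos_of_isUpperSet
    (convex_setOf_exists_forall_lt fun i => by
      simpa [Q', sub_eq_add_neg, Pi.add_def] using (hQ i).add_const (-θ))
    (isOpen_setOf_exists_forall_lt Q')
    (fun y z hyz ⟨d, hd⟩ => ⟨d, fun i => (hd i).trans_le (hyz i)⟩)
    ⟨fun i => Q' i 0 + 1, 0, fun i => lt_add_one _⟩
    (fun ⟨d, hd⟩ => by obtain ⟨i, hi⟩ := h d; linarith [hd i, Pi.zero_apply (M := fun _ => ℝ) i])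
  refine ⟨w, hw, fun d => le_of_forall_pos_lt_add fun ε hε => ?_⟩
  have := hpos (fun i => Q' i d + ε) ⟨d, fun i => lt_add_of_pos_right _ hε⟩
  simp only [Q', mul_add, mul_sub, Finset.sum_add_distrib, Finset.sum_sub_distrib,
    ← Finset.sum_mul, hw.2, one_mul] at this
  linarith

theorem mul_sub_eq_zero_of_le_sum_mul {ι : Type*} [Fintype ι] {w a : ι → ℝ} {θ : ℝ}
    (hw : w ∈ stdSimplex ℝ ι) (ha : ∀ i, a i ≤ θ) (hθ : θ ≤ ∑ i, w i * a i) (i : ι) :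
    w i * (a i - θ) = 0 := by
  have hnonpos : ∀ i ∈ Finset.univ, w i * (a i - θ) ≤ 0 := fun i _ =>
    mul_nonpos_of_nonneg_of_nonpos (hw.1 i) (sub_nonpos.2 (ha i))
  have hsum : ∑ i, w i * (a i - θ) = ∑ i, w i * a i - θ := by
    simp only [mul_sub, Finset.sum_sub_distrib, ← Finset.sum_mul, hw.2, one_mul]
  refine (Finset.sum_eq_zero_iff_of_nonpos hnonpos).mp ?_ i (Finset.mem_univ i)
  exact le_antisymm (Finset.sum_nonpos hnonpos) (by linarith)

namespace NPQN

variable {n m : ℕ}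

theorem mquad_smul_add_smul (B : Matrix (Fin n) (Fin n) ℝ) (a b : ℝ)
    (u v : EuclideanSpace ℝ (Fin n)) :
    mquad B (a • u + b • v) =
      a ^ 2 * mquad B u + a * b * ⟪u, Matrix.toEuclideanLin B v⟫ +
        a * b * ⟪v, Matrix.toEuclideanLin B u⟫ + b ^ 2 * mquad B v := by
  simp only [mquad, map_add, map_smul, inner_add_left, inner_add_right,
    real_inner_smul_left, real_inner_smul_right]
  ring

theorem mquad_add_smul_s6 {B : Matrix (Fin n) (Fin n) ℝ} (hB : B.IsSymm)
    (d u : EuclideanSpace ℝ (Fin n)) (t : ℝ) :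
    mquad B (d + t • u) =
      mquad B d + 2 * t * ⟪Matrix.toEuclideanLin B d, u⟫ + t ^ 2 * mquad B u := by
  have hsymm : ⟪Matrix.toEuclideanLin B d, u⟫ = ⟪d, Matrix.toEuclideanLin B u⟫ :=
    Matrix.isSymmetric_toEuclideanLin_iff.mpr (Matrix.isHermitian_iff_isSymm.mpr hB) d u
  rw [← one_smul ℝ d, mquad_smul_add_smul, one_smul, ← hsymm, real_inner_comm _ u]
  ring

theorem convexOn_mquad {B : Matrix (Fin n) (Fin n) ℝ} (hB : ∀ v, 0 ≤ mquad B v) :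
    ConvexOn ℝ univ (mquad B) := by
  refine ⟨convex_univ, fun u _ v _ a b ha hb hab => ?_⟩
  have hdiff : a * mquad B u + b * mquad B v - mquad B (a • u + b • v) =
      a * b * mquad B (u - v) := by
    have h := mquad_smul_add_smul B 1 (-1) u v
    rw [one_smul, neg_one_smul, ← sub_eq_add_neg] at h
    rw [mquad_smul_add_smul, h, show b = 1 - a by linarith]
    ring
  have := mul_nonneg (mul_nonneg ha hb) (hB (u - v))
  simp only [smul_eq_mul]
  linarith

section Subproblem

variable {f g : Fin m → EuclideanSpace ℝ (Fin n) → ℝ} {B : Fin m → Matrix (Fin n) (Fin n) ℝ}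

theorem convexOn_Qj {j : Fin m} (hg : ConvexOn ℝ univ (g j)) (hB : ∀ v, 0 ≤ mquad (B j) v)
    (x : EuclideanSpace ℝ (Fin n)) :
    ConvexOn ℝ univ (fun d => Qj f g B x d j) := by
  have hlin := (innerₛₗ ℝ (gradient (f j) x)).convexOn convex_univ
  have hquad := (convexOn_mquad hB).smul (by norm_num : (0 : ℝ) ≤ 1 / 2)
  have htrans : ConvexOn ℝ univ fun d => g j (x + d) := by
    simpa [Function.comp_def] using hg.translate_right x
  refine (((hlin.add hquad).add htrans).add_const (-g j x)).congr fun d _ => ?_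
  simp [Qj, sub_eq_add_neg]

theorem hasDerivWithinAt_Qj_add_smul {j : Fin m} (hB : (B j).IsSymm)
    (hg : ConvexOn ℝ univ (g j)) (x d u : EuclideanSpace ℝ (Fin n)) :
    HasDerivWithinAt (fun t : ℝ => Qj f g B x (d + t • u) j)
      (⟪gradient (f j) x + Matrix.toEuclideanLin (B j) d, u⟫ + dirDeriv (g j) (x + d) u)
      (Ioi 0) 0 := by
  set a := gradient (f j) x + Matrix.toEuclideanLin (B j) d
  have hpoly : HasDerivAt (fun t : ℝ => Qj f g B x d j - g j (x + d) + t * ⟪a, u⟫ +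
      t ^ 2 / 2 * mquad (B j) u) ⟪a, u⟫ 0 :=
    ((((hasDerivAt_id' (0 : ℝ)).mul_const ⟪a, u⟫).const_add _).add
      (((hasDerivAt_pow 2 (0 : ℝ)).div_const 2).mul_const (mquad (B j) u))).congr_deriv
        (by norm_num)
  have hline : (fun t : ℝ => Qj f g B x (d + t • u) j) = fun t => Qj f g B x d j - g j (x + d) +
      t * ⟪a, u⟫ + t ^ 2 / 2 * mquad (B j) u + g j (x + d + t • u) := by
    funext t
    simp only [Qj, mquad_add_smul_s6 hB, add_assoc, a, inner_add_left, inner_add_right,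
      real_inner_smul_right]
    ring
  rw [hline]
  exact hpoly.hasDerivWithinAt.add (hg.hasDerivWithinAt_dirDeriv (x + d) u)

theorem neg_inner_le_sum_dirDeriv_of_isMinOn {lam : Fin m → ℝ} (hB : ∀ j, (B j).IsSymm)
    (hg : ∀ j, ConvexOn ℝ univ (g j)) {x d : EuclideanSpace ℝ (Fin n)}
    (hmin : IsMinOn (fun e => ∑ j, lam j * Qj f g B x e j) univ d)
    (u : EuclideanSpace ℝ (Fin n)) :
    -⟪∑ j, lam j • (gradient (f j) x + Matrix.toEuclideanLin (B j) d), u⟫ ≤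
      ∑ j, lam j * dirDeriv (g j) (x + d) u := by
  have hderiv := HasDerivWithinAt.fun_sum fun j (_ : j ∈ Finset.univ) =>
    (hasDerivWithinAt_Qj_add_smul (f := f) (hB j) (hg j) x d u).const_mul (lam j)
  have h := nonneg_of_hasDerivWithinAt_Ioi hderiv fun t _ => by
    simpa using hmin (mem_univ (d + t • u))
  simp only [sum_inner, real_inner_smul_left, mul_add, Finset.sum_add_distrib] at h ⊢
  linarith

theorem isSubgradAt_of_inner_le_dirDeriv {g : EuclideanSpace ℝ (Fin n) → ℝ}
    (hg : ConvexOn ℝ univ g) {y ξ : EuclideanSpace ℝ (Fin n)}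
    (h : ∀ u, ⟪ξ, u⟫ ≤ dirDeriv g y u) : IsSubgradAt g y ξ := fun z => by
  have := (h (z - y)).trans (hg.dirDeriv_le_sub y (z - y))
  rw [add_sub_cancel] at this
  linarith

end Subproblem

theorem kkt_of_minimizer_general
    (n m : ℕ) (hm : 1 ≤ m)
    (f g : Fin m → EuclideanSpace ℝ (Fin n) → ℝ)
    (hgconv : ∀ j, ConvexOn ℝ Set.univ (g j))
    (B : Fin m → Matrix (Fin n) (Fin n) ℝ)
    (hBsymm : ∀ j, (B j).IsSymm)
    (hBpd : ∀ j, ∀ v : EuclideanSpace ℝ (Fin n), v ≠ 0 → 0 < mquad (B j) v)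
    (x dstar : EuclideanSpace ℝ (Fin n))
    (hmin : ∀ e, Qmax f g B x dstar ≤ Qmax f g B x e)
    (θ : ℝ) (hθ : θ = Qmax f g B x dstar) :
    ∃ (lam : Fin m → ℝ) (ξ : Fin m → EuclideanSpace ℝ (Fin n)),
      (∀ j, 0 ≤ lam j) ∧ (∑ j, lam j = 1) ∧
      (∀ j, IsSubgradAt (g j) (x + dstar) (ξ j)) ∧
      (∑ j, lam j • (gradient (f j) x + Matrix.toEuclideanLin (B j) dstar + ξ j)) = 0 ∧
      (∀ j, Qj f g B x dstar j ≤ θ) ∧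
      (∀ j, lam j * (Qj f g B x dstar j - θ) = 0) := by
  have : Nonempty (Fin m) := Fin.pos_iff_nonempty.mp hm
  have hQle : ∀ j, Qj f g B x dstar j ≤ θ := fun j =>
    hθ ▸ le_ciSup (Set.finite_range _).bddAbove j
  have hθle : ∀ e, ∃ j, θ ≤ Qj f g B x e j := fun e => by
    obtain ⟨j, hj⟩ := exists_eq_ciSup_of_finite (f := fun j => Qj f g B x e j)
    exact ⟨j, by rw [hθ, hj]; exact hmin e⟩
  have hBpsd : ∀ j v, 0 ≤ mquad (B j) v := fun j v => by
    rcases eq_or_ne v 0 with rfl | hv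
    · simp [mquad]
    · exact (hBpd j v hv).le
  obtain ⟨lam, hlam, hθlam⟩ := exists_mem_stdSimplex_le_sum_mul
    (fun j => convexOn_Qj (f := f) (hgconv j) (hBpsd j) x) hθle
  have hlam_min : IsMinOn (fun e => ∑ j, lam j * Qj f g B x e j) univ dstar := fun e _ =>
    (Finset.sum_le_sum fun j _ => mul_le_mul_of_nonneg_left (hQle j) (hlam.1 j)).trans <| by
      rw [← Finset.sum_mul, hlam.2, one_mul]; exact hθlam e
  obtain ⟨ξ, hξ, hξsum⟩ := exists_inner_le_of_inner_le_sum_mul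
    (fun j => dirDeriv (g j) (x + dstar)) (fun j c hc u => (hgconv j).dirDeriv_smul _ u hc)
    (fun j => (hgconv j).dirDeriv_add_le _) hlam.1 (fun h => by simpa [h] using hlam.2)
    (ξ := -∑ j, lam j • (gradient (f j) x + Matrix.toEuclideanLin (B j) dstar)) fun u => by
      simpa only [inner_neg_left] using
        neg_inner_le_sum_dirDeriv_of_isMinOn hBsymm hgconv hlam_min u
  refine ⟨lam, ξ, hlam.1, hlam.2, fun j => isSubgradAt_of_inner_le_dirDeriv (hgconv j) (hξ j),
    ?_, hQle, mul_sub_eq_zero_of_le_sum_mul hlam hQle (hθlam dstar)⟩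
  simp only [smul_add, Finset.sum_add_distrib, hξsum, add_neg_cancel]

/-- KKT conditions at a minimizer of `Q(x,·)`: there exist `λ ∈ Δ_m` and
subgradients `ξ_j ∈ ∂g_j(x+d*)` with `Σ λ_j(∇f_j(x) + B_j d* + ξ_j) = 0`,
`Q_j(x,d*) ≤ θ` for all `j`, and `λ_j (Q_j(x,d*) − θ) = 0` for all `j`. -/
theorem kkt_of_minimizer
    (n m : ℕ) (hn : 1 ≤ n) (hm : 1 ≤ m)
    (f g : Fin m → EuclideanSpace ℝ (Fin n) → ℝ)
    (hfconv : ∀ j, ConvexOn ℝ Set.univ (f j))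
    (hfdiff : ∀ j, ContDiff ℝ 1 (f j))
    (hgconv : ∀ j, ConvexOn ℝ Set.univ (g j))
    (hgcont : ∀ j, Continuous (g j))
    (B : Fin m → Matrix (Fin n) (Fin n) ℝ)
    (hBsymm : ∀ j, (B j).IsSymm)
    (hBpd : ∀ j, ∀ v : EuclideanSpace ℝ (Fin n), v ≠ 0 → 0 < mquad (B j) v)
    (x dstar : EuclideanSpace ℝ (Fin n))
    (hmin : ∀ e, Qmax f g B x dstar ≤ Qmax f g B x e)
    (θ : ℝ) (hθ : θ = Qmax f g B x dstar) :
    ∃ (lam : Fin m → ℝ) (ξ : Fin m → EuclideanSpace ℝ (Fin n)),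
      (∀ j, 0 ≤ lam j) ∧ (∑ j, lam j = 1) ∧
      (∀ j, IsSubgradAt (g j) (x + dstar) (ξ j)) ∧
      (∑ j, lam j • (gradient (f j) x + Matrix.toEuclideanLin (B j) dstar + ξ j)) = 0 ∧
      (∀ j, Qj f g B x dstar j ≤ θ) ∧
      (∀ j, lam j * (Qj f g B x dstar j - θ) = 0) :=
  kkt_of_minimizer_general n m hm f g hgconv B hBsymm hBpd x dstar hmin θ hθ

end NPQN
end
end

section
/- Let x, d ∈ ℝⁿ, θ ∈ ℝ, λ ∈ Δ_m, and ξ_j ∈ ∂g_j(x+d) for j = 1,…,m satisfy Σ_{j=1}^m λ_j(∇f_j(x) + B_j d + ξ_j) = 0, Q_j(x,d) ≤ θ for all j, and λ_j(Q_j(x,d) − θ) = 0 for all j. Then θ ≤ −(1/2) Σ_{j=1}^m λ_j ⟨d, B_j d⟩. If moreover σ > 0 and B_j ⪰ σI for all j, then θ ≤ −(σ/2)‖d‖². -/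
open Filter Topology
open scoped RealInnerProductSpace BigOperators

noncomputable section

namespace NPQN

variable {n m : ℕ}

/-!
By complementarity and `∑ λ_j = 1`, `θ = ∑ λ_j Q_j(x,d)`. The subgradient inequality at `x + d`
bounds `g_j(x+d) - g_j(x)` by `⟨ξ_j, d⟩`, and pairing the stationarity condition with `d` shows that
the resulting upper bound `∑ λ_j (⟨∇f_j(x), d⟩ + ½⟨d, B_j d⟩ + ⟨ξ_j, d⟩)` equals
`-½ ∑ λ_j ⟨d, B_j d⟩`. The second bound follows since this average of `⟨d, B_j d⟩` is at least `σ‖d‖²`.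
-/

theorem _root_.Finset.sum_mul_eq_of_complementary {ι : Type*} (s : Finset ι) {w q : ι → ℝ} {θ : ℝ}
    (hw : ∑ j ∈ s, w j = 1) (hcomp : ∀ j ∈ s, w j * (q j - θ) = 0) :
    ∑ j ∈ s, w j * q j = θ := by
  have h : ∑ j ∈ s, (w j * q j - w j * θ) = 0 :=
    Finset.sum_eq_zero fun j hj => by rw [← mul_sub]; exact hcomp j hj
  rwa [Finset.sum_sub_distrib, ← Finset.sum_mul, hw, one_mul, sub_eq_zero] at h

theorem _root_.Finset.le_sum_mul_of_le {ι : Type*} (s : Finset ι) {w a : ι → ℝ} {c : ℝ}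
    (hw0 : ∀ j ∈ s, 0 ≤ w j) (hw1 : ∑ j ∈ s, w j = 1) (ha : ∀ j ∈ s, c ≤ a j) :
    c ≤ ∑ j ∈ s, w j * a j :=
  calc c = ∑ j ∈ s, w j * c := by rw [← Finset.sum_mul, hw1, one_mul]
    _ ≤ ∑ j ∈ s, w j * a j :=
      Finset.sum_le_sum fun j hj => mul_le_mul_of_nonneg_left (ha j hj) (hw0 j hj)

theorem IsSubgradAt.sub_le_inner {g : EuclideanSpace ℝ (Fin n) → ℝ} {x d ξ : EuclideanSpace ℝ (Fin n)}
    (h : IsSubgradAt g (x + d) ξ) : g (x + d) - g x ≤ ⟪ξ, d⟫ := by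
  have hx := h x
  rw [show x - (x + d) = -d by abel, inner_neg_right] at hx
  linarith

theorem inner_toEuclideanLin_self (B : Matrix (Fin n) (Fin n) ℝ) (d : EuclideanSpace ℝ (Fin n)) :
    ⟪Matrix.toEuclideanLin B d, d⟫ = mquad B d :=
  real_inner_comm _ _

def linearizedQj (f : Fin m → EuclideanSpace ℝ (Fin n) → ℝ) (B : Fin m → Matrix (Fin n) (Fin n) ℝ)
    (ξ : Fin m → EuclideanSpace ℝ (Fin n)) (x d : EuclideanSpace ℝ (Fin n)) (j : Fin m) : ℝ :=
  ⟪gradient (f j) x, d⟫ + (1 / 2) * mquad (B j) d + ⟪ξ j, d⟫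

section KKT

variable {f g : Fin m → EuclideanSpace ℝ (Fin n) → ℝ} {B : Fin m → Matrix (Fin n) (Fin n) ℝ}
  {x d : EuclideanSpace ℝ (Fin n)} {ξ : Fin m → EuclideanSpace ℝ (Fin n)}

theorem Qj_le_linearizedQj {j : Fin m} (hξ : IsSubgradAt (g j) (x + d) (ξ j)) :
    Qj f g B x d j ≤ linearizedQj f B ξ x d j := by
  have := hξ.sub_le_inner
  unfold Qj linearizedQj
  linarith

theorem sum_mul_linearizedQj_of_stationary {lam : Fin m → ℝ}
    (hstat : (∑ j, lam j • (gradient (f j) x + Matrix.toEuclideanLin (B j) d + ξ j)) = 0) :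
    ∑ j, lam j * linearizedQj f B ξ x d j = -(1 / 2) * ∑ j, lam j * mquad (B j) d := by
  have h := congrArg (fun v => ⟪v, d⟫) hstat
  simp only [sum_inner, real_inner_smul_left, inner_add_left, inner_zero_left,
    inner_toEuclideanLin_self] at h
  rw [Finset.mul_sum, ← sub_eq_zero, ← Finset.sum_sub_distrib, ← h]
  refine Finset.sum_congr rfl fun j _ => ?_
  unfold linearizedQj
  ring

end KKT

theorem theta_bound_from_kkt_general
    (n m : ℕ)
    (f g : Fin m → EuclideanSpace ℝ (Fin n) → ℝ)
    (B : Fin m → Matrix (Fin n) (Fin n) ℝ)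
    (x d : EuclideanSpace ℝ (Fin n)) (θ : ℝ)
    (lam : Fin m → ℝ) (hlam0 : ∀ j, 0 ≤ lam j) (hlam1 : ∑ j, lam j = 1)
    (ξ : Fin m → EuclideanSpace ℝ (Fin n))
    (hξ : ∀ j, IsSubgradAt (g j) (x + d) (ξ j))
    (hstat : (∑ j, lam j • (gradient (f j) x + Matrix.toEuclideanLin (B j) d + ξ j)) = 0)
    (hcomp : ∀ j, lam j * (Qj f g B x d j - θ) = 0) :
    θ ≤ -(1 / 2) * ∑ j, lam j * mquad (B j) d ∧
    (∀ σ : ℝ, 0 < σ → (∀ j, MatGE (B j) σ) → θ ≤ -(σ / 2) * ‖d‖ ^ 2) := by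
  have hmain : θ ≤ -(1 / 2) * ∑ j, lam j * mquad (B j) d :=
    calc θ = ∑ j, lam j * Qj f g B x d j :=
          (Finset.univ.sum_mul_eq_of_complementary hlam1 fun j _ => hcomp j).symm
      _ ≤ ∑ j, lam j * linearizedQj f B ξ x d j :=
          Finset.sum_le_sum fun j _ =>
            mul_le_mul_of_nonneg_left (Qj_le_linearizedQj (hξ j)) (hlam0 j)
      _ = -(1 / 2) * ∑ j, lam j * mquad (B j) d := sum_mul_linearizedQj_of_stationary hstat
  refine ⟨hmain, fun σ _ hB => ?_⟩
  have hσ : σ * ‖d‖ ^ 2 ≤ ∑ j, lam j * mquad (B j) d :=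
    Finset.univ.le_sum_mul_of_le (fun j _ => hlam0 j) hlam1 fun j _ => hB j d
  linarith

/-- If `(d, θ, λ, ξ)` satisfy the KKT conditions, then
`θ ≤ −(1/2) Σ_j λ_j ⟨d, B_j d⟩`; if moreover `B_j ⪰ σI` for all `j` with `σ > 0`,
then `θ ≤ −(σ/2)‖d‖²`. -/
theorem theta_bound_from_kkt
    (n m : ℕ) (hn : 1 ≤ n) (hm : 1 ≤ m)
    (f g : Fin m → EuclideanSpace ℝ (Fin n) → ℝ)
    (hfconv : ∀ j, ConvexOn ℝ Set.univ (f j))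
    (hfdiff : ∀ j, ContDiff ℝ 1 (f j))
    (hgconv : ∀ j, ConvexOn ℝ Set.univ (g j))
    (hgcont : ∀ j, Continuous (g j))
    (B : Fin m → Matrix (Fin n) (Fin n) ℝ)
    (hBsymm : ∀ j, (B j).IsSymm)
    (x d : EuclideanSpace ℝ (Fin n)) (θ : ℝ)
    (lam : Fin m → ℝ) (hlam0 : ∀ j, 0 ≤ lam j) (hlam1 : ∑ j, lam j = 1)
    (ξ : Fin m → EuclideanSpace ℝ (Fin n))
    (hξ : ∀ j, IsSubgradAt (g j) (x + d) (ξ j))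
    (hstat : (∑ j, lam j • (gradient (f j) x + Matrix.toEuclideanLin (B j) d + ξ j)) = 0)
    (hle : ∀ j, Qj f g B x d j ≤ θ)
    (hcomp : ∀ j, lam j * (Qj f g B x d j - θ) = 0) :
    θ ≤ -(1 / 2) * ∑ j, lam j * mquad (B j) d ∧
    (∀ σ : ℝ, 0 < σ → (∀ j, MatGE (B j) σ) → θ ≤ -(σ / 2) * ‖d‖ ^ 2) :=
  theta_bound_from_kkt_general n m f g B x d θ lam hlam0 hlam1 ξ hξ hstat hcomp

end NPQN
end
end

section
/- Let η ∈ [0,1) and τ ∈ (0,1). Let {x^k} ⊂ ℝⁿ, let α_k ≥ 0 and θ_k ≤ 0 be real sequences, and define q_0 = 1, q_{k+1} = η q_k + 1, C_j^0 = F_j(x^0), and C_j^{k+1} = (η q_k C_j^k + F_j(x^{k+1}))/q_{k+1} for each j ∈ {1,…,m}. Assume that for every k and every j, F_j(x^{k+1}) ≤ C_j^k + τ α_k θ_k, and that each F_j is bounded from below on ℝⁿ. Then for each j the sequence {C_j^k} is nonincreasing in k and converges to a finite limit as k → ∞. -/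
open Filter Topology
open scoped RealInnerProductSpace BigOperators

noncomputable section

namespace NPQN

variable {n m : ℕ}

/- `C_j^{k+1}` is an average of `C_j^k` and `F_j(x^{k+1})` with the nonnegative weights
`η q_k` and `1`, and the descent condition puts `F_j(x^{k+1})` below `C_j^k`. Hence `C_j` decreases,
and `C_j^k ≥ F_j(x^{k+1}) ≥ inf F_j` bounds it from below. -/

theorem nonneg_of_rec_mul_add_one {η : ℝ} {q : ℕ → ℝ} (hη : 0 ≤ η) (h0 : 0 ≤ q 0)
    (hrec : ∀ k, q (k + 1) = η * q k + 1) : ∀ k, 0 ≤ q k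
  | 0 => h0
  | k + 1 => by
    rw [hrec]
    have := nonneg_of_rec_mul_add_one hη h0 hrec k
    positivity

theorem mul_add_div_add_one_le {w c v : ℝ} (hw : 0 ≤ w) (hv : v ≤ c) :
    (w * c + v) / (w + 1) ≤ c := by
  rw [div_le_iff₀ (by linarith)]
  linarith

section AveragedValues

variable {η : ℝ} {q C F : ℕ → ℝ}

theorem antitone_of_averaged (hη : 0 ≤ η) (hq : ∀ k, 0 ≤ q k)
    (hqrec : ∀ k, q (k + 1) = η * q k + 1)
    (hCrec : ∀ k, C (k + 1) = (η * q k * C k + F (k + 1)) / q (k + 1))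
    (hF : ∀ k, F (k + 1) ≤ C k) : Antitone C :=
  antitone_nat_of_succ_le fun k => by
    rw [hCrec, hqrec]
    exact mul_add_div_add_one_le (mul_nonneg hη (hq k)) (hF k)

theorem exists_tendsto_of_antitone_of_le_succ (hC : Antitone C) (hF : ∀ k, F (k + 1) ≤ C k)
    (hbdd : BddBelow (Set.range F)) : ∃ l, Tendsto C atTop (𝓝 l) := by
  obtain ⟨b, hb⟩ := hbdd
  refine ⟨_, tendsto_atTop_ciInf hC ⟨b, ?_⟩⟩
  rintro _ ⟨k, rfl⟩
  exact (hb ⟨k + 1, rfl⟩).trans (hF k)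

end AveragedValues

theorem averaged_values_antitone_and_converge_general
    (n m : ℕ)
    (f g : Fin m → EuclideanSpace ℝ (Fin n) → ℝ)
    (η τ : ℝ) (hη : η ∈ Set.Ico (0 : ℝ) 1) (hτ : τ ∈ Set.Ioo (0 : ℝ) 1)
    (x : ℕ → EuclideanSpace ℝ (Fin n))
    (α θk : ℕ → ℝ) (hα : ∀ k, 0 ≤ α k) (hθk : ∀ k, θk k ≤ 0)
    (q : ℕ → ℝ) (C : Fin m → ℕ → ℝ)
    (hq0 : q 0 = 1) (hqrec : ∀ k, q (k + 1) = η * q k + 1)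
    (hCrec : ∀ j k, C j (k + 1) =
      (η * q k * C j k + (f j (x (k + 1)) + g j (x (k + 1)))) / q (k + 1))
    (hdesc : ∀ k j, f j (x (k + 1)) + g j (x (k + 1)) ≤ C j k + τ * α k * θk k)
    (hbdd : ∀ j, BddBelow (Set.range (fun y => f j y + g j y))) :
    ∀ j, Antitone (C j) ∧ ∃ Clim : ℝ, Tendsto (fun k => C j k) atTop (𝓝 Clim) := by
  intro j
  have hq : ∀ k, 0 ≤ q k := nonneg_of_rec_mul_add_one hη.1 (hq0 ▸ zero_le_one) hqrec
  have hF : ∀ k, f j (x (k + 1)) + g j (x (k + 1)) ≤ C j k := fun k =>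
    (hdesc k j).trans <| add_le_of_nonpos_right <|
      mul_nonpos_of_nonneg_of_nonpos (mul_nonneg hτ.1.le (hα k)) (hθk k)
  have hanti : Antitone (C j) :=
    antitone_of_averaged (F := fun k => f j (x k) + g j (x k)) hη.1 hq hqrec (hCrec j) hF
  exact ⟨hanti, exists_tendsto_of_antitone_of_le_succ hanti hF
    ((hbdd j).mono (Set.range_comp_subset_range x _))⟩

/-- The averaged values `C_j^k` of the nonmonotone line search are
nonincreasing in `k` and converge to a finite limit, provided each `F_j` is bounded
from below and the nonmonotone descent condition holds. -/
theorem averaged_values_antitone_and_converge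
    (n m : ℕ) (hn : 1 ≤ n) (hm : 1 ≤ m)
    (f g : Fin m → EuclideanSpace ℝ (Fin n) → ℝ)
    (hfconv : ∀ j, ConvexOn ℝ Set.univ (f j))
    (hfdiff : ∀ j, ContDiff ℝ 1 (f j))
    (hgconv : ∀ j, ConvexOn ℝ Set.univ (g j))
    (hgcont : ∀ j, Continuous (g j))
    (η τ : ℝ) (hη : η ∈ Set.Ico (0 : ℝ) 1) (hτ : τ ∈ Set.Ioo (0 : ℝ) 1)
    (x : ℕ → EuclideanSpace ℝ (Fin n))
    (α θk : ℕ → ℝ) (hα : ∀ k, 0 ≤ α k) (hθk : ∀ k, θk k ≤ 0)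
    (q : ℕ → ℝ) (C : Fin m → ℕ → ℝ)
    (hq0 : q 0 = 1) (hqrec : ∀ k, q (k + 1) = η * q k + 1)
    (hC0 : ∀ j, C j 0 = f j (x 0) + g j (x 0))
    (hCrec : ∀ j k, C j (k + 1) =
      (η * q k * C j k + (f j (x (k + 1)) + g j (x (k + 1)))) / q (k + 1))
    (hdesc : ∀ k j, f j (x (k + 1)) + g j (x (k + 1)) ≤ C j k + τ * α k * θk k)
    (hbdd : ∀ j, BddBelow (Set.range (fun y => f j y + g j y))) :
    ∀ j, Antitone (C j) ∧ ∃ Clim : ℝ, Tendsto (fun k => C j k) atTop (𝓝 Clim) :=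
  averaged_values_antitone_and_converge_general n m f g η τ hη hτ x α θk hα hθk q C hq0 hqrec hCrec
    hdesc hbdd

end NPQN
end
end

section
/- Let η ∈ (0,1) and τ ∈ (0,1). Let {x^k} ⊂ ℝⁿ, let α_k ≥ 0 and θ_k ≤ 0 be real sequences, and define q_0 = 1, q_{k+1} = η q_k + 1, C_j^0 = F_j(x^0), and C_j^{k+1} = (η q_k C_j^k + F_j(x^{k+1}))/q_{k+1} for each j ∈ {1,…,m}. Assume that for every k and every j, F_j(x^{k+1}) ≤ C_j^k + τ α_k θ_k, and that each F_j is bounded from below on ℝⁿ. Then lim_{k→∞} α_k |θ_k| = 0. -/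
open Filter Topology
open scoped RealInnerProductSpace BigOperators

noncomputable section

namespace NPQN

variable {n m : ℕ}

/-! The weights `q k = 1 + η + ⋯ + ηᵏ` stay in `[1, (1 - η)⁻¹]`, and each reference value `C j (k + 1)`
is a weighted average of `C j k` and `F_j(x^{k+1})`. Hence the descent condition makes `C j` drop
by at least `τ α_k |θ_k| / q (k + 1)` at every step, while `C j` stays above any lower bound of `F_j`.
The decrements are therefore summable, so they tend to zero, and the bound on `q` transfers this
to `α_k |θ_k|`. -/

section WeightRecursion

variable {η : ℝ} {q : ℕ → ℝ}

lemma one_le_of_weight_rec (hη : 0 ≤ η) (hq0 : q 0 = 1)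
    (hqrec : ∀ k, q (k + 1) = η * q k + 1) (k : ℕ) : 1 ≤ q k := by
  induction k with
  | zero => rw [hq0]
  | succ k ih => rw [hqrec]; nlinarith

lemma le_inv_one_sub_of_weight_rec (hη0 : 0 ≤ η) (hη1 : η < 1) (hq0 : q 0 = 1)
    (hqrec : ∀ k, q (k + 1) = η * q k + 1) (k : ℕ) : q k ≤ (1 - η)⁻¹ := by
  have h1η : 0 < 1 - η := sub_pos.mpr hη1
  induction k with
  | zero => rw [hq0, one_le_inv₀ h1η]; linarith
  | succ k ih =>
    calc q (k + 1) = η * q k + 1 := hqrec k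
      _ ≤ η * (1 - η)⁻¹ + 1 := by gcongr
      _ = (1 - η)⁻¹ := by field_simp; ring

end WeightRecursion

section WeightedAverage

variable {η : ℝ} {q C F : ℕ → ℝ} (hqpos : ∀ k, 0 < q k)
  (hqrec : ∀ k, q (k + 1) = η * q k + 1)
  (hCrec : ∀ k, C (k + 1) = (η * q k * C k + F (k + 1)) / q (k + 1))
include hqpos hqrec hCrec

lemma le_of_weighted_average (hη : 0 ≤ η) {L : ℝ} (h0 : L ≤ C 0) (hF : ∀ k, L ≤ F (k + 1))
    (k : ℕ) : L ≤ C k := by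
  induction k with
  | zero => exact h0
  | succ k ih =>
    rw [hCrec, le_div_iff₀ (hqpos _), hqrec]
    nlinarith [mul_le_mul_of_nonneg_left ih (mul_nonneg hη (hqpos k).le), hF k]

lemma weighted_average_succ_add_le {k : ℕ} {ε : ℝ} (hF : F (k + 1) ≤ C k - ε) :
    C (k + 1) + ε / q (k + 1) ≤ C k := by
  rw [hCrec, ← add_div, div_le_iff₀ (hqpos _), hqrec]
  have hexpand : C k * (η * q k + 1) = η * q k * C k + C k := by ring
  linarith

end WeightedAverage

lemma summable_of_succ_add_le {C b : ℕ → ℝ} {L : ℝ} (hb : ∀ k, 0 ≤ b k)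
    (hC : ∀ k, C (k + 1) + b k ≤ C k) (hL : ∀ k, L ≤ C k) : Summable b :=
  summable_of_sum_range_le hb fun N =>
    calc ∑ i ∈ Finset.range N, b i ≤ ∑ i ∈ Finset.range N, (C i - C (i + 1)) :=
          Finset.sum_le_sum fun i _ => by linarith [hC i]
      _ = C 0 - C N := Finset.sum_range_sub' C N
      _ ≤ C 0 - L := by linarith [hL N]

theorem alpha_theta_tendsto_zero_general
    (n m : ℕ) (hm : 1 ≤ m)
    (f g : Fin m → EuclideanSpace ℝ (Fin n) → ℝ)
    (η τ : ℝ) (hη : η ∈ Set.Ioo (0 : ℝ) 1) (hτ : τ ∈ Set.Ioo (0 : ℝ) 1)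
    (x : ℕ → EuclideanSpace ℝ (Fin n))
    (α θk : ℕ → ℝ) (hα : ∀ k, 0 ≤ α k) (hθk : ∀ k, θk k ≤ 0)
    (q : ℕ → ℝ) (C : Fin m → ℕ → ℝ)
    (hq0 : q 0 = 1) (hqrec : ∀ k, q (k + 1) = η * q k + 1)
    (hC0 : ∀ j, C j 0 = f j (x 0) + g j (x 0))
    (hCrec : ∀ j k, C j (k + 1) =
      (η * q k * C j k + (f j (x (k + 1)) + g j (x (k + 1)))) / q (k + 1))
    (hdesc : ∀ k j, f j (x (k + 1)) + g j (x (k + 1)) ≤ C j k + τ * α k * θk k)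
    (hbdd : ∀ j, BddBelow (Set.range (fun y => f j y + g j y))) :
    Tendsto (fun k => α k * |θk k|) atTop (𝓝 0) := by
  obtain ⟨hη0, hη1⟩ := hη
  have hτ0 : 0 < τ := hτ.1
  set j : Fin m := ⟨0, hm⟩
  obtain ⟨L, hL⟩ := hbdd j
  have hFL : ∀ z, L ≤ f j z + g j z := fun z => hL ⟨z, rfl⟩
  set F : ℕ → ℝ := fun k => f j (x k) + g j (x k)
  have hqpos : ∀ k, 0 < q k := fun k => one_pos.trans_le (one_le_of_weight_rec hη0.le hq0 hqrec k)
  set d : ℕ → ℝ := fun k => τ * (α k * |θk k|) / q (k + 1) with hd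
  have hd_nonneg : ∀ k, 0 ≤ d k := fun k =>
    div_nonneg (mul_nonneg hτ0.le (mul_nonneg (hα k) (abs_nonneg _))) (hqpos _).le
  have hdecr : ∀ k, C j (k + 1) + d k ≤ C j k := fun k =>
    weighted_average_succ_add_le (F := F) hqpos hqrec (hCrec j) <| by
      rw [abs_of_nonpos (hθk k)]; linarith [hdesc k j]
  have hCL : ∀ k, L ≤ C j k :=
    le_of_weighted_average (F := F) hqpos hqrec (hCrec j) hη0.le (hC0 j ▸ hFL _) fun _ => hFL _
  have hd_lim : Tendsto d atTop (𝓝 0) :=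
    (summable_of_succ_add_le hd_nonneg hdecr hCL).tendsto_atTop_zero
  have hbound : ∀ k, α k * |θk k| ≤ (1 - η)⁻¹ / τ * d k := fun k =>
    calc α k * |θk k| = q (k + 1) / τ * d k := by rw [hd]; field_simp [(hqpos (k + 1)).ne']
      _ ≤ (1 - η)⁻¹ / τ * d k := by
        gcongr
        · exact hd_nonneg k
        · exact le_inv_one_sub_of_weight_rec hη0.le hη1 hq0 hqrec _
  exact squeeze_zero (fun k => mul_nonneg (hα k) (abs_nonneg _)) hbound
    (by simpa using hd_lim.const_mul ((1 - η)⁻¹ / τ))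

/-- Under the nonmonotone descent condition with `η ∈ (0,1)` and each
`F_j` bounded from below, `lim_{k→∞} α_k |θ_k| = 0`. -/
theorem alpha_theta_tendsto_zero
    (n m : ℕ) (hn : 1 ≤ n) (hm : 1 ≤ m)
    (f g : Fin m → EuclideanSpace ℝ (Fin n) → ℝ)
    (hfconv : ∀ j, ConvexOn ℝ Set.univ (f j))
    (hfdiff : ∀ j, ContDiff ℝ 1 (f j))
    (hgconv : ∀ j, ConvexOn ℝ Set.univ (g j))
    (hgcont : ∀ j, Continuous (g j))
    (η τ : ℝ) (hη : η ∈ Set.Ioo (0 : ℝ) 1) (hτ : τ ∈ Set.Ioo (0 : ℝ) 1)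
    (x : ℕ → EuclideanSpace ℝ (Fin n))
    (α θk : ℕ → ℝ) (hα : ∀ k, 0 ≤ α k) (hθk : ∀ k, θk k ≤ 0)
    (q : ℕ → ℝ) (C : Fin m → ℕ → ℝ)
    (hq0 : q 0 = 1) (hqrec : ∀ k, q (k + 1) = η * q k + 1)
    (hC0 : ∀ j, C j 0 = f j (x 0) + g j (x 0))
    (hCrec : ∀ j k, C j (k + 1) =
      (η * q k * C j k + (f j (x (k + 1)) + g j (x (k + 1)))) / q (k + 1))
    (hdesc : ∀ k j, f j (x (k + 1)) + g j (x (k + 1)) ≤ C j k + τ * α k * θk k)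
    (hbdd : ∀ j, BddBelow (Set.range (fun y => f j y + g j y))) :
    Tendsto (fun k => α k * |θk k|) atTop (𝓝 0) :=
  alpha_theta_tendsto_zero_general n m hm f g η τ hη hτ x α θk hα hθk q C hq0 hqrec hC0 hCrec hdesc
    hbdd

end NPQN
end
end

section
/- Let λ ∈ Δ_m, let each f_j be convex and twice continuously differentiable, each g_j convex and continuous, and each B_j symmetric positive definite. Write f_λ = Σ_j λ_j f_j, g_λ = Σ_j λ_j g_j, F_λ = f_λ + g_λ, B_λ = Σ_j λ_j B_j, and ‖v‖²_{B_λ} = ⟨v, B_λ v⟩. Let x, d ∈ ℝⁿ, set x⁺ = x + d, and suppose −∇f_λ(x) − B_λ d ∈ ∂g_λ(x⁺). Then for every y ∈ ℝⁿ: F_λ(x⁺) − F_λ(y) ≤ (1/2)‖x − y‖²_{B_λ} − (1/2)‖x⁺ − x‖²_{B_λ} − (1/2)‖x⁺ − y‖²_{B_λ} + ∫₀¹∫₀¹ t ⟨x⁺ − x, ∇²f_λ(x + st(x⁺ − x))(x⁺ − x)⟩ ds dt − ∫₀¹∫₀¹ t ⟨y − x, ∇²f_λ(x + st(y − x))(y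 − x)⟩ ds dt. -/
/-!
Expand `f_λ(x⁺)` and `f_λ(y)` around `x` by Taylor's formula, whose remainder is the double
Hessian integral: the inner integral over `s` is the increment of `⟨v, ∇f_λ⟩` along the segment,
and the outer one integrates the derivative of `f_λ`. The subgradient inequality at `y` bounds
`g_λ(x⁺) − g_λ(y)` by `⟨∇f_λ(x) + B_λ d, y − x⁺⟩`; the gradient terms then cancel, and for the
symmetric `B_λ` the three-point identity
`½‖x − y‖² − ½‖x⁺ − x‖² − ½‖x⁺ − y‖² = ⟨B_λ(x⁺ − x), y − x⁺⟩` (norms in `B_λ`)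
turns the remaining term into the quadratic part of the bound.
-/

open Filter Topology
open scoped RealInnerProductSpace BigOperators

noncomputable section

section

variable {E F : Type*} [NormedAddCommGroup E] [InnerProductSpace ℝ E]

theorem ContDiff.gradient [CompleteSpace E] {f : E → ℝ} {k l : WithTop ℕ∞}
    (hf : ContDiff ℝ k f) (hl : l + 1 ≤ k) : ContDiff ℝ l (gradient f) :=
  (InnerProductSpace.toDual ℝ E).symm.contDiff.comp (hf.fderiv_right hl)

theorem integral_fderiv_add_smul [NormedAddCommGroup F] [NormedSpace ℝ F] [CompleteSpace F]
    {f : E → F} (hf : ContDiff ℝ 1 f) (x v : E) :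
    ∫ t in (0:ℝ)..1, fderiv ℝ f (x + t • v) v = f (x + v) - f x := by
  have := map_add_eq_sum_add_integral_iteratedFDeriv (n := 0) (x := x) (y := v)
    fun t _ => hf.contDiffAt
  rw [eq_sub_iff_add_eq', eq_comm]
  simpa using this

theorem LinearMap.IsSymmetric.three_point_identity {T : E →ₗ[ℝ] E} (hT : T.IsSymmetric)
    (x y z : E) :
    1 / 2 * ⟪x - y, T (x - y)⟫ - 1 / 2 * ⟪z - x, T (z - x)⟫ - 1 / 2 * ⟪z - y, T (z - y)⟫
      = ⟪T (z - x), y - z⟫ := by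
  have swap : ∀ a b, ⟪b, T a⟫ = ⟪a, T b⟫ := fun a b => by rw [← hT, real_inner_comm]
  rw [hT]
  simp only [map_sub, inner_sub_left, inner_sub_right]
  rw [swap x y, swap x z, swap y z]
  ring

end

theorem Matrix.isSymm_sum {ι α n : Type*} [AddCommMonoid α] (s : Finset ι)
    {A : ι → Matrix n n α} (hA : ∀ i ∈ s, (A i).IsSymm) : (∑ i ∈ s, A i).IsSymm :=
  Finset.sum_induction A Matrix.IsSymm (fun _ _ => Matrix.IsSymm.add) Matrix.isSymm_zero hA

namespace NPQN

variable {n : ℕ}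

theorem integral_inner_hess_eq_inner_gradient_sub {f : EuclideanSpace ℝ (Fin n) → ℝ}
    (hf : ContDiff ℝ 2 f) (x v : EuclideanSpace ℝ (Fin n)) (t : ℝ) :
    ∫ s in (0:ℝ)..1, t * ⟪v, hess f (x + (s * t) • v) v⟫
      = ⟪v, gradient f (x + t • v)⟫ - ⟪v, gradient f x⟫ := by
  have hgrad : ContDiff ℝ 1 (gradient f) := hf.gradient (by norm_num)
  have fderiv_inner_gradient :
      ∀ z, fderiv ℝ (fun z => ⟪v, gradient f z⟫) z = (innerSL ℝ v).comp (hess f z) :=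
    fun z => ((innerSL ℝ v).hasFDerivAt.comp z
      ((hgrad.differentiable one_ne_zero) z).hasFDerivAt).fderiv
  rw [← integral_fderiv_add_smul (contDiff_const.inner ℝ hgrad) x (t • v)]
  refine intervalIntegral.integral_congr fun s _ => ?_
  simp only [fderiv_inner_gradient, ContinuousLinearMap.comp_apply, innerSL_apply_apply, map_smul,
    smul_smul, smul_eq_mul]

theorem taylor_integral_hess {f : EuclideanSpace ℝ (Fin n) → ℝ} (hf : ContDiff ℝ 2 f)
    (x v : EuclideanSpace ℝ (Fin n)) :
    f (x + v) = f x + ⟪gradient f x, v⟫ +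
      ∫ t in (0:ℝ)..1, ∫ s in (0:ℝ)..1, t * ⟪v, hess f (x + (s * t) • v) v⟫ := by
  have hcont : Continuous fun t : ℝ => ⟪v, gradient f (x + t • v)⟫ :=
    continuous_const.inner ((hf.gradient (l := 0) (by norm_num)).continuous.comp (by fun_prop))
  have hline : ∫ t in (0:ℝ)..1, ⟪v, gradient f (x + t • v)⟫ = f (x + v) - f x := by
    rw [← integral_fderiv_add_smul (hf.of_le one_le_two) x v]
    exact intervalIntegral.integral_congr fun t _ => by rw [real_inner_comm, inner_gradient_left]
  simp_rw [integral_inner_hess_eq_inner_gradient_sub hf]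
  rw [intervalIntegral.integral_sub (hcont.intervalIntegrable 0 1) intervalIntegrable_const,
    hline, intervalIntegral.integral_const, sub_zero, one_smul, real_inner_comm]
  ring

theorem fundamental_inequality_general
    (n m : ℕ)
    (f : Fin m → EuclideanSpace ℝ (Fin n) → ℝ)
    (hf2 : ∀ j, ContDiff ℝ 2 (f j))
    (B : Fin m → Matrix (Fin n) (Fin n) ℝ)
    (hBsymm : ∀ j, (B j).IsSymm)
    (lam : Fin m → ℝ)
    (fl gl : EuclideanSpace ℝ (Fin n) → ℝ)
    (hfl : fl = fun z => ∑ j, lam j * f j z)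
    (Bl : Matrix (Fin n) (Fin n) ℝ) (hBl : Bl = ∑ j, lam j • B j)
    (x d xp : EuclideanSpace ℝ (Fin n)) (hxp : xp = x + d)
    (hsubgrad : IsSubgradAt gl xp (-(gradient fl x) - Matrix.toEuclideanLin Bl d)) :
    ∀ y : EuclideanSpace ℝ (Fin n),
      (fl xp + gl xp) - (fl y + gl y) ≤
        1 / 2 * mquad Bl (x - y) - 1 / 2 * mquad Bl (xp - x) - 1 / 2 * mquad Bl (xp - y)
        + (∫ t in (0:ℝ)..1, ∫ s in (0:ℝ)..1,
            t * ⟪xp - x, hess fl (x + (s * t) • (xp - x)) (xp - x)⟫)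
        - (∫ t in (0:ℝ)..1, ∫ s in (0:ℝ)..1,
            t * ⟪y - x, hess fl (x + (s * t) • (y - x)) (y - x)⟫) := by
  intro y
  have hflC : ContDiff ℝ 2 fl := hfl ▸ ContDiff.sum fun j _ => contDiff_const.mul (hf2 j)
  have hBlsymm : (Matrix.toEuclideanLin Bl).IsSymmetric := by
    rw [Matrix.isSymmetric_toEuclideanLin_iff, Matrix.isHermitian_iff_isSymm, hBl]
    exact Matrix.isSymm_sum _ fun j _ => (hBsymm j).smul (lam j)
  have taylor_xp := taylor_integral_hess hflC x (xp - x)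
  have taylor_y := taylor_integral_hess hflC x (y - x)
  rw [add_sub_cancel] at taylor_xp taylor_y
  have hsub := hsubgrad y
  rw [show d = xp - x by rw [hxp, add_sub_cancel_left], inner_sub_left, inner_neg_left] at hsub
  have three_point := hBlsymm.three_point_identity x y xp
  have grad_terms :
      ⟪gradient fl x, xp - x⟫ - ⟪gradient fl x, y - x⟫ + ⟪gradient fl x, y - xp⟫ = 0 := by
    simp only [inner_sub_right]; ring
  unfold mquad
  linarith

/-- The fundamental inequality. If
`−∇f_λ(x) − B_λ d ∈ ∂g_λ(x⁺)` where `x⁺ = x + d`, then for every `y`,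
`F_λ(x⁺) − F_λ(y) ≤ (1/2)‖x−y‖²_{B_λ} − (1/2)‖x⁺−x‖²_{B_λ} − (1/2)‖x⁺−y‖²_{B_λ}
 + ∫₀¹∫₀¹ t⟨x⁺−x, ∇²f_λ(x+st(x⁺−x))(x⁺−x)⟩ ds dt
 − ∫₀¹∫₀¹ t⟨y−x, ∇²f_λ(x+st(y−x))(y−x)⟩ ds dt`. -/
theorem fundamental_inequality
    (n m : ℕ) (hn : 1 ≤ n) (hm : 1 ≤ m)
    (f g : Fin m → EuclideanSpace ℝ (Fin n) → ℝ)
    (hfconv : ∀ j, ConvexOn ℝ Set.univ (f j))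
    (hf2 : ∀ j, ContDiff ℝ 2 (f j))
    (hgconv : ∀ j, ConvexOn ℝ Set.univ (g j))
    (hgcont : ∀ j, Continuous (g j))
    (B : Fin m → Matrix (Fin n) (Fin n) ℝ)
    (hBsymm : ∀ j, (B j).IsSymm)
    (hBpd : ∀ j, ∀ v : EuclideanSpace ℝ (Fin n), v ≠ 0 → 0 < mquad (B j) v)
    (lam : Fin m → ℝ) (hlam0 : ∀ j, 0 ≤ lam j) (hlam1 : ∑ j, lam j = 1)
    (fl gl : EuclideanSpace ℝ (Fin n) → ℝ)
    (hfl : fl = fun z => ∑ j, lam j * f j z)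
    (hgl : gl = fun z => ∑ j, lam j * g j z)
    (Bl : Matrix (Fin n) (Fin n) ℝ) (hBl : Bl = ∑ j, lam j • B j)
    (x d xp : EuclideanSpace ℝ (Fin n)) (hxp : xp = x + d)
    (hsubgrad : IsSubgradAt gl xp (-(gradient fl x) - Matrix.toEuclideanLin Bl d)) :
    ∀ y : EuclideanSpace ℝ (Fin n),
      (fl xp + gl xp) - (fl y + gl y) ≤
        1 / 2 * mquad Bl (x - y) - 1 / 2 * mquad Bl (xp - x) - 1 / 2 * mquad Bl (xp - y)
        + (∫ t in (0:ℝ)..1, ∫ s in (0:ℝ)..1,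
            t * ⟪xp - x, hess fl (x + (s * t) • (xp - x)) (xp - x)⟫)
        - (∫ t in (0:ℝ)..1, ∫ s in (0:ℝ)..1,
            t * ⟪y - x, hess fl (x + (s * t) • (y - x)) (y - x)⟫) :=
  fundamental_inequality_general n m f hf2 B hBsymm lam fl gl hfl Bl hBl x d xp hxp hsubgrad

end NPQN
end
end

section
/- Let σ > 0 and ε > 0 with 3ε < σ. Let x, x⁺, x* ∈ ℝⁿ with x ≠ x*, and suppose σ‖x⁺ − x*‖² ≤ 3ε‖x⁺ − x‖² + 3ε‖x − x*‖². Set t = ‖x⁺ − x‖/‖x − x*‖. Then (σ − 3ε)t² − 2σt + (σ − 3ε) ≤ 0; consequently (σ − √(6σε − 9ε²))/(σ − 3ε) ≤ t ≤ (σ + √(6σε − 9ε²))/(σ − 3ε), and ‖x⁺ − x*‖ ≤ √(3ε(1 + t²)/σ) · ‖x − x*‖. -/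
/-!
By the reverse triangle inequality `|‖x⁺ - x‖ - ‖x - x*‖| ≤ ‖x⁺ - x*‖`, the hypothesis gives
`σ (a - b)² ≤ 3ε a² + 3ε b²` for `a = ‖x⁺ - x‖ = t b` and `b = ‖x - x*‖ > 0`; dividing by `b²` is the
quadratic inequality in `t`, whose roots give the interval for `t`. The last bound is the hypothesis
itself with `a = t b`.
-/

theorem mem_Icc_of_quadratic_nonpos {p q r t : ℝ} (hp : 0 < p)
    (h : p * t ^ 2 - 2 * q * t + r ≤ 0) :
    t ∈ Set.Icc ((q - √(q ^ 2 - p * r)) / p) ((q + √(q ^ 2 - p * r)) / p) := by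
  have hsq : (p * t - q) ^ 2 ≤ q ^ 2 - p * r := by nlinarith
  obtain ⟨hlo, hhi⟩ := abs_le.1 (Real.abs_le_sqrt hsq)
  constructor
  · rw [div_le_iff₀ hp]; linarith
  · rw [le_div_iff₀ hp]; linarith

section Metric

variable {X : Type*} [PseudoMetricSpace X] {σ k : ℝ} {x y z : X}

theorem quadratic_nonpos_of_sq_dist_le (hσ : 0 ≤ σ) (hxz : 0 < dist x z)
    (h : σ * dist y z ^ 2 ≤ k * dist y x ^ 2 + k * dist x z ^ 2) :
    (σ - k) * (dist y x / dist x z) ^ 2 - 2 * σ * (dist y x / dist x z) + (σ - k) ≤ 0 := by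
  have hrev : |dist y x - dist x z| ≤ dist y z := dist_comm z x ▸ abs_dist_sub_le y z x
  have hsq : (dist y x - dist x z) ^ 2 ≤ dist y z ^ 2 :=
    sq_le_sq.2 (hrev.trans (le_abs_self _))
  have hform : (σ - k) * (dist y x / dist x z) ^ 2 - 2 * σ * (dist y x / dist x z) + (σ - k) =
      (σ * (dist y x - dist x z) ^ 2 - k * dist y x ^ 2 - k * dist x z ^ 2) / dist x z ^ 2 := by
    field_simp
    ring
  rw [hform]
  apply div_nonpos_of_nonpos_of_nonneg _ (sq_nonneg _)
  nlinarith

theorem dist_le_sqrt_mul_dist_of_sq_dist_le (hσ : 0 < σ) (hxz : 0 < dist x z)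
    (h : σ * dist y z ^ 2 ≤ k * dist y x ^ 2 + k * dist x z ^ 2) :
    dist y z ≤ √(k * (1 + (dist y x / dist x z) ^ 2) / σ) * dist x z := by
  have hscale : k * (1 + (dist y x / dist x z) ^ 2) / σ * dist x z ^ 2 =
      (k * dist y x ^ 2 + k * dist x z ^ 2) / σ := by
    field_simp
    ring
  calc dist y z ≤ √((k * dist y x ^ 2 + k * dist x z ^ 2) / σ) :=
        Real.le_sqrt_of_sq_le ((le_div_iff₀ hσ).2 (by linarith))
    _ = √(k * (1 + (dist y x / dist x z) ^ 2) / σ) * dist x z := by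
        rw [← hscale, Real.sqrt_mul' _ (sq_nonneg _), Real.sqrt_sq hxz.le]

end Metric

theorem quadratic_ratio_bounds_general
    (n : ℕ)
    (σ ε : ℝ) (hσ : 0 < σ) (h3ε : 3 * ε < σ)
    (x xp xstar : EuclideanSpace ℝ (Fin n)) (hxne : x ≠ xstar)
    (hineq : σ * ‖xp - xstar‖ ^ 2 ≤ 3 * ε * ‖xp - x‖ ^ 2 + 3 * ε * ‖x - xstar‖ ^ 2)
    (t : ℝ) (ht : t = ‖xp - x‖ / ‖x - xstar‖) :
    (σ - 3 * ε) * t ^ 2 - 2 * σ * t + (σ - 3 * ε) ≤ 0 ∧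
    (σ - Real.sqrt (6 * σ * ε - 9 * ε ^ 2)) / (σ - 3 * ε) ≤ t ∧
    t ≤ (σ + Real.sqrt (6 * σ * ε - 9 * ε ^ 2)) / (σ - 3 * ε) ∧
    ‖xp - xstar‖ ≤ Real.sqrt (3 * ε * (1 + t ^ 2) / σ) * ‖x - xstar‖ := by
  have hxz : 0 < dist x xstar := dist_pos.2 hxne
  simp only [← dist_eq_norm] at hineq ht ⊢
  subst ht
  have hquad := quadratic_nonpos_of_sq_dist_le hσ.le hxz hineq
  have hdisc : σ ^ 2 - (σ - 3 * ε) * (σ - 3 * ε) = 6 * σ * ε - 9 * ε ^ 2 := by ring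
  obtain ⟨hlo, hhi⟩ := hdisc ▸ mem_Icc_of_quadratic_nonpos (sub_pos.2 h3ε) hquad
  exact ⟨hquad, hlo, hhi, dist_le_sqrt_mul_dist_of_sq_dist_le hσ hxz hineq⟩

/-- If `σ‖x⁺ − x*‖² ≤ 3ε‖x⁺ − x‖² + 3ε‖x − x*‖²` with `0 < 3ε < σ` and
`x ≠ x*`, then with `t = ‖x⁺ − x‖/‖x − x*‖` one has
`(σ − 3ε)t² − 2σt + (σ − 3ε) ≤ 0`, hence
`(σ − √(6σε − 9ε²))/(σ − 3ε) ≤ t ≤ (σ + √(6σε − 9ε²))/(σ − 3ε)`, and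
`‖x⁺ − x*‖ ≤ √(3ε(1 + t²)/σ)·‖x − x*‖`. -/
theorem quadratic_ratio_bounds
    (n : ℕ) (hn : 1 ≤ n)
    (σ ε : ℝ) (hσ : 0 < σ) (hε : 0 < ε) (h3ε : 3 * ε < σ)
    (x xp xstar : EuclideanSpace ℝ (Fin n)) (hxne : x ≠ xstar)
    (hineq : σ * ‖xp - xstar‖ ^ 2 ≤ 3 * ε * ‖xp - x‖ ^ 2 + 3 * ε * ‖x - xstar‖ ^ 2)
    (t : ℝ) (ht : t = ‖xp - x‖ / ‖x - xstar‖) :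
    (σ - 3 * ε) * t ^ 2 - 2 * σ * t + (σ - 3 * ε) ≤ 0 ∧
    (σ - Real.sqrt (6 * σ * ε - 9 * ε ^ 2)) / (σ - 3 * ε) ≤ t ∧
    t ≤ (σ + Real.sqrt (6 * σ * ε - 9 * ε ^ 2)) / (σ - 3 * ε) ∧
    ‖xp - xstar‖ ≤ Real.sqrt (3 * ε * (1 + t ^ 2) / σ) * ‖x - xstar‖ :=
  quadratic_ratio_bounds_general n σ ε hσ h3ε x xp xstar hxne hineq t ht
end

section
/- Let σ > 0, let x* ∈ ℝⁿ, and let {x^k} ⊂ ℝⁿ be a sequence with x^k ≠ x* for all k. Suppose there is a sequence ε_k → 0 with 0 < 3ε_k < σ such that σ‖x^{k+1} − x*‖² ≤ 3ε_k‖x^{k+1} − x^k‖² + 3ε_k‖x^k − x*‖² for all k. Then lim_{k→∞} ‖x^{k+1} − x*‖/‖x^k − x*‖ = 0; in particular {x^k} converges superlinearly to x*. -/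
/-!
The hypothesis, together with `‖x^{k+1} − x^k‖² ≤ 2‖x^{k+1} − x*‖² + 2‖x^k − x*‖²`, gives
`(σ − 6ε_k)‖x^{k+1} − x*‖² ≤ 9ε_k‖x^k − x*‖²`, so once `ε_k < σ/12` the error contracts by the
factor `√(18ε_k/σ) → 0`. This yields the vanishing ratio, and a contraction factor eventually
below `1/2` makes the errors summable, hence convergent to `0`.
-/

open Filter Topology

noncomputable section

section ErrorRecursion

variable {E : Type*} [SeminormedAddCommGroup E]

theorem sub_mul_sq_norm_sub_le {σ ε : ℝ} {x y z : E} (hε : 0 ≤ ε)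
    (h : σ * ‖y - z‖ ^ 2 ≤ 3 * ε * ‖y - x‖ ^ 2 + 3 * ε * ‖x - z‖ ^ 2) :
    (σ - 6 * ε) * ‖y - z‖ ^ 2 ≤ 9 * ε * ‖x - z‖ ^ 2 := by
  have htri : ‖y - x‖ ≤ ‖y - z‖ + ‖x - z‖ := by
    simpa only [norm_sub_rev z x] using norm_sub_le_norm_sub_add_norm_sub y z x
  have hsq : ‖y - x‖ ^ 2 ≤ 2 * ‖y - z‖ ^ 2 + 2 * ‖x - z‖ ^ 2 := by
    nlinarith [norm_nonneg (y - x), sq_nonneg (‖y - z‖ - ‖x - z‖)]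
  nlinarith [mul_le_mul_of_nonneg_left hsq (by positivity : (0 : ℝ) ≤ 3 * ε)]

theorem norm_sub_le_sqrt_mul_norm_sub {σ ε : ℝ} {x y z : E} (hσ : 0 < σ) (hε : 0 ≤ ε)
    (hεσ : 12 * ε ≤ σ)
    (h : σ * ‖y - z‖ ^ 2 ≤ 3 * ε * ‖y - x‖ ^ 2 + 3 * ε * ‖x - z‖ ^ 2) :
    ‖y - z‖ ≤ √(18 * ε / σ) * ‖x - z‖ := by
  have hsq : ‖y - z‖ ^ 2 ≤ 18 * ε / σ * ‖x - z‖ ^ 2 := by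
    rw [div_mul_eq_mul_div, le_div_iff₀ hσ]
    nlinarith [sub_mul_sq_norm_sub_le hε h, sq_nonneg ‖y - z‖]
  calc ‖y - z‖ = √(‖y - z‖ ^ 2) := (Real.sqrt_sq (norm_nonneg _)).symm
    _ ≤ √(18 * ε / σ * ‖x - z‖ ^ 2) := Real.sqrt_le_sqrt hsq
    _ = √(18 * ε / σ) * ‖x - z‖ := by
      rw [Real.sqrt_mul' _ (sq_nonneg _), Real.sqrt_sq (norm_nonneg _)]

end ErrorRecursion

section Contraction

variable {r c : ℕ → ℝ}

theorem tendsto_div_zero_of_eventually_le_mul (hr : ∀ k, 0 ≤ r k)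
    (hc : Tendsto c atTop (𝓝 0)) (h : ∀ᶠ k in atTop, r (k + 1) ≤ c k * r k) :
    Tendsto (fun k => r (k + 1) / r k) atTop (𝓝 0) := by
  refine squeeze_zero' (Eventually.of_forall fun k => div_nonneg (hr _) (hr _)) ?_
    (by simpa using hc.abs)
  filter_upwards [h] with k hk
  rcases (hr k).eq_or_lt with hzero | hpos
  · simp [← hzero]
  · rw [div_le_iff₀ hpos]
    exact hk.trans (mul_le_mul_of_nonneg_right (le_abs_self _) hpos.le)

theorem tendsto_zero_of_eventually_le_mul (hr : ∀ k, 0 ≤ r k)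
    (hc : Tendsto c atTop (𝓝 0)) (h : ∀ᶠ k in atTop, r (k + 1) ≤ c k * r k) :
    Tendsto r atTop (𝓝 0) := by
  have hhalf : ∀ᶠ k in atTop, ‖r (k + 1)‖ ≤ 1 / 2 * ‖r k‖ := by
    filter_upwards [h, hc.eventually_le_const (by norm_num : (0 : ℝ) < 1 / 2)] with k hk hck
    rw [Real.norm_of_nonneg (hr _), Real.norm_of_nonneg (hr _)]
    exact hk.trans (mul_le_mul_of_nonneg_right hck (hr k))
  exact (summable_of_ratio_norm_eventually_le (by norm_num) hhalf).tendsto_atTop_zero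

end Contraction

theorem superlinear_convergence_general
    (n : ℕ)
    (σ : ℝ) (hσ : 0 < σ)
    (xstar : EuclideanSpace ℝ (Fin n)) (x : ℕ → EuclideanSpace ℝ (Fin n))
    (ε : ℕ → ℝ) (hεpos : ∀ k, 0 < ε k)
    (hεto : Tendsto ε atTop (𝓝 0))
    (hineq : ∀ k, σ * ‖x (k + 1) - xstar‖ ^ 2 ≤
      3 * ε k * ‖x (k + 1) - x k‖ ^ 2 + 3 * ε k * ‖x k - xstar‖ ^ 2) :
    Tendsto (fun k => ‖x (k + 1) - xstar‖ / ‖x k - xstar‖) atTop (𝓝 0) ∧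
    Tendsto x atTop (𝓝 xstar) := by
  have hstep : ∀ᶠ k in atTop,
      ‖x (k + 1) - xstar‖ ≤ √(18 * ε k / σ) * ‖x k - xstar‖ := by
    filter_upwards [hεto.eventually_le_const (by positivity : 0 < σ / 12)] with k hk
    exact norm_sub_le_sqrt_mul_norm_sub hσ (hεpos k).le (by linarith) (hineq k)
  have hfactor : Tendsto (fun k => √(18 * ε k / σ)) atTop (𝓝 0) := by
    have h := ((hεto.const_mul 18).div_const σ).sqrt
    rwa [mul_zero, zero_div, Real.sqrt_zero] at h
  set r : ℕ → ℝ := fun k => ‖x k - xstar‖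
  have hr : ∀ k, 0 ≤ r k := fun _ => norm_nonneg _
  exact ⟨tendsto_div_zero_of_eventually_le_mul hr hfactor hstep,
    tendsto_iff_norm_sub_tendsto_zero.mpr (tendsto_zero_of_eventually_le_mul hr hfactor hstep)⟩

/-- If `σ‖x^{k+1} − x*‖² ≤ 3ε_k‖x^{k+1} − x^k‖² + 3ε_k‖x^k − x*‖²` with
`0 < 3ε_k < σ`, `ε_k → 0`, and `x^k ≠ x*` for all `k`, then
`lim_{k→∞} ‖x^{k+1} − x*‖/‖x^k − x*‖ = 0`; in particular `{x^k}` converges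
superlinearly to `x*`. -/
theorem superlinear_convergence
    (n : ℕ) (hn : 1 ≤ n)
    (σ : ℝ) (hσ : 0 < σ)
    (xstar : EuclideanSpace ℝ (Fin n)) (x : ℕ → EuclideanSpace ℝ (Fin n))
    (hne : ∀ k, x k ≠ xstar)
    (ε : ℕ → ℝ) (hεpos : ∀ k, 0 < ε k) (hεlt : ∀ k, 3 * ε k < σ)
    (hεto : Tendsto ε atTop (𝓝 0))
    (hineq : ∀ k, σ * ‖x (k + 1) - xstar‖ ^ 2 ≤
      3 * ε k * ‖x (k + 1) - x k‖ ^ 2 + 3 * ε k * ‖x k - xstar‖ ^ 2) :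
    Tendsto (fun k => ‖x (k + 1) - xstar‖ / ‖x k - xstar‖) atTop (𝓝 0) ∧
    Tendsto x atTop (𝓝 xstar) :=
  superlinear_convergence_general n σ hσ xstar x ε hεpos hεto hineq

end
end
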